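/- arXiv:1204.5863 — 13 statements merged into one kernel-verified Lean document; each statement's English description precedes it below -/
import Mathlib

section
/- Let $R$ be a unital ring equipped with a unital ring homomorphism $\phi: A \to R$, a monoid homomorphism $s \mapsto s_-$ from $S^{op}$ to $R$, and a monoid homomorphism $t \mapsto t_+$ from $T$ to $R$, satisfying: (1) $t_+ \phi(a) = \phi(\alpha_t(a)) t_+$ for all $a \in A$, $t \in T$; (3) $s_- s_+ = 1$ for all $s \in S$; and (2') $s_+ \phi(a) s_- = \phi(\alpha_s(a))$ for all $a \in A$, $s \in S$. Then relations (2) $\phi(a) s_- = s_- \phi(\alpha_s(a))$ and (4) $s_+ s_- = \phi(p_s)$ hold for all $a \in A$ and $s \in S$. -/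
theorem mul_eq_mul_conj_of_mul_eq_one {M : Type*} [Monoid M] {m p : M} (h : m * p = 1) (x : M) :
    x * m = m * (p * x * m) := by
  rw [← mul_assoc, ← mul_assoc, h, one_mul]

theorem stmt2_general {A T R : Type*} [Ring A] [Monoid T] [Ring R]
    (S : Submonoid T)
    (α : T → A → A)
    (φ : A →+* R)
    (minus : S → R) (plus : T → R)
    (h3 : ∀ s : S, minus s * plus (s : T) = 1)
    (h2' : ∀ (s : S) (a : A), plus (s : T) * φ a * minus s = φ (α (s : T) a)) :
    (∀ (s : S) (a : A), φ a * minus s = minus s * φ (α (s : T) a)) ∧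
    (∀ s : S, plus (s : T) * minus s = φ (α (s : T) 1)) := by
  refine ⟨fun s a => ?_, fun s => ?_⟩
  · rw [← h2']
    exact mul_eq_mul_conj_of_mul_eq_one (h3 s) (φ a)
  · simpa only [map_one, mul_one] using h2' s 1

/-- In a unital ring `R` with a unital ring homomorphism `φ : A → R`,
an antimultiplicative map `minus` on the submonoid `S` and a multiplicative map `plus`
on `T`, satisfying relations (1), (3) and (2'), the relations
(2) `φ a * s₋ = s₋ * φ (α_s a)` and (4) `s₊ * s₋ = φ (p_s)` follow. -/
theorem stmt2 {A T R : Type*} [Ring A] [Monoid T] [Ring R]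
    (S : Submonoid T)
    (α : T → A → A)
    (φ : A →+* R)
    (minus : S → R) (plus : T → R)
    (hminus_one : minus 1 = 1)
    (hminus_mul : ∀ s t : S, minus (s * t) = minus t * minus s)
    (hplus_one : plus 1 = 1)
    (hplus_mul : ∀ s t : T, plus (s * t) = plus s * plus t)
    (h1 : ∀ (t : T) (a : A), plus t * φ a = φ (α t a) * plus t)
    (h3 : ∀ s : S, minus s * plus (s : T) = 1)
    (h2' : ∀ (s : S) (a : A), plus (s : T) * φ a * minus s = φ (α (s : T) a)) :
    (∀ (s : S) (a : A), φ a * minus s = minus s * φ (α (s : T) a)) ∧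
    (∀ s : S, plus (s : T) * minus s = φ (α (s : T) 1)) :=
  stmt2_general S α φ minus plus h3 h2'
end

section
/- The set $S_- A S_+ := \{ s_- a s_+ : s \in S, a \in A \}$ is a unital subring of the fractional skew monoid ring $S^{op} *_\alpha A *_\alpha S$, and it contains $A$ as a unital subring. Concretely, for $s, t \in S$ with $\hat{s} t = \hat{t} s$: $(t_- a t_+)(s_- b s_+) = (\hat{s} t)_- (\alpha_{\hat{s}}(p_t a p_t) \alpha_{\hat{t}}(p_s b p_s)) (\hat{s} t)_+$ and $(t_- a t_+) + (s_- b s_+) = (\hat{s} t)_- (\alpha_{\hat{s}}(p_t a p_t) + \alpha_{\hat{t}}(p_s b p_s)) (\hat{s} t)_+$. -/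
/-!
Any two elements `t₋ a t₊` and `s₋ b s₊` can be brought to the common
denominator `u = ŝ t = t̂ s`: since `ŝ₋ α_ŝ(x) ŝ₊ = x` and `p_t` is absorbed by `t₋` and
`t₊`, we get `t₋ a t₊ = u₋ α_ŝ(p_t a p_t) u₊`. Sums are then immediate, and in products the
middle factor `u₊ u₋ = p_u = α_ŝ(p_t)` is absorbed by `α_ŝ(p_t a p_t)`.
-/

namespace FractionalSkewMonoidRing

variable {A S R : Type*} [Ring A] [Ring R]
  {α : S → A → A} {φ : A →+* R} {plus minus : S → R}

def fractions (φ : A →+* R) (plus minus : S → R) : Set R :=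
  {x | ∃ (s : S) (a : A), x = minus s * φ a * plus s}

theorem map_eq_minus_mul_map_mul_plus
    (rel2 : ∀ (s : S) (a : A), φ a * minus s = minus s * φ (α s a))
    (rel3 : ∀ s : S, minus s * plus s = 1) (s : S) (a : A) :
    φ a = minus s * φ (α s a) * plus s := by
  rw [← rel2, mul_assoc, rel3, mul_one]

theorem range_subset_fractions
    (rel2 : ∀ (s : S) (a : A), φ a * minus s = minus s * φ (α s a))
    (rel3 : ∀ s : S, minus s * plus s = 1) (s : S) :
    Set.range φ ⊆ fractions φ plus minus := by
  rintro _ ⟨a, rfl⟩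
  exact ⟨s, α s a, map_eq_minus_mul_map_mul_plus rel2 rel3 s a⟩

theorem minus_mul_map_idem
    (rel3 : ∀ s : S, minus s * plus s = 1) (rel4 : ∀ s : S, plus s * minus s = φ (α s 1))
    (t : S) : minus t * φ (α t 1) = minus t := by
  rw [← rel4, ← mul_assoc, rel3, one_mul]

theorem map_idem_mul_plus
    (rel3 : ∀ s : S, minus s * plus s = 1) (rel4 : ∀ s : S, plus s * minus s = φ (α s 1))
    (t : S) : φ (α t 1) * plus t = plus t := by
  rw [← rel4, mul_assoc, rel3, mul_one]

theorem fraction_corner_eq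
    (rel3 : ∀ s : S, minus s * plus s = 1) (rel4 : ∀ s : S, plus s * minus s = φ (α s 1))
    (t : S) (a : A) :
    minus t * φ (α t 1 * a * α t 1) * plus t = minus t * φ a * plus t := by
  calc minus t * φ (α t 1 * a * α t 1) * plus t
      = (minus t * φ (α t 1)) * φ a * (φ (α t 1) * plus t) := by simp only [map_mul, mul_assoc]
    _ = minus t * φ a * plus t := by rw [minus_mul_map_idem rel3 rel4, map_idem_mul_plus rel3 rel4]

theorem fraction_expand_denom [Monoid S]
    (hplus_mul : ∀ s t : S, plus (s * t) = plus s * plus t)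
    (hminus_mul : ∀ s t : S, minus (s * t) = minus t * minus s)
    (rel2 : ∀ (s : S) (a : A), φ a * minus s = minus s * φ (α s a))
    (rel3 : ∀ s : S, minus s * plus s = 1) (rel4 : ∀ s : S, plus s * minus s = φ (α s 1))
    (u t : S) (a : A) :
    minus (u * t) * φ (α u (α t 1 * a * α t 1)) * plus (u * t) = minus t * φ a * plus t := by
  calc minus (u * t) * φ (α u (α t 1 * a * α t 1)) * plus (u * t)
      = minus t * (minus u * φ (α u (α t 1 * a * α t 1)) * plus u) * plus t := by
        simp only [hminus_mul, hplus_mul, mul_assoc]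
    _ = minus t * φ (α t 1 * a * α t 1) * plus t := by
        rw [← map_eq_minus_mul_map_mul_plus rel2 rel3]
    _ = minus t * φ a * plus t := fraction_corner_eq rel3 rel4 t a

theorem fraction_mul_fraction_same_denom
    (rel4 : ∀ s : S, plus s * minus s = φ (α s 1)) (u : S) (x y : A) :
    (minus u * φ x * plus u) * (minus u * φ y * plus u) =
      minus u * φ (x * α u 1 * y) * plus u := by
  calc (minus u * φ x * plus u) * (minus u * φ y * plus u)
      = minus u * φ x * (plus u * minus u) * φ y * plus u := by simp only [mul_assoc]
    _ = minus u * φ (x * α u 1 * y) * plus u := by rw [rel4]; simp only [map_mul, mul_assoc]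

theorem map_corner_mul_idem_mul [Monoid S]
    (hmul : ∀ (t : S) (a b : A), α t (a * b) = α t a * α t b)
    (hcomp : ∀ (s t : S) (a : A), α (s * t) a = α s (α t a)) (u t : S) (a : A) :
    α u (α t 1 * a * α t 1) * α (u * t) 1 = α u (α t 1 * a * α t 1) := by
  have hp : α t 1 * α t 1 = α t 1 := by rw [← hmul, one_mul]
  rw [hcomp, ← hmul, mul_assoc _ (α t 1), hp]

theorem fraction_add_fraction [Monoid S]
    (hplus_mul : ∀ s t : S, plus (s * t) = plus s * plus t)
    (hminus_mul : ∀ s t : S, minus (s * t) = minus t * minus s)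
    (rel2 : ∀ (s : S) (a : A), φ a * minus s = minus s * φ (α s a))
    (rel3 : ∀ s : S, minus s * plus s = 1) (rel4 : ∀ s : S, plus s * minus s = φ (α s 1))
    {s t sh th : S} (h : sh * t = th * s) (a b : A) :
    (minus t * φ a * plus t) + (minus s * φ b * plus s) =
      minus (sh * t) * φ (α sh (α t 1 * a * α t 1) + α th (α s 1 * b * α s 1)) *
        plus (sh * t) := by
  rw [map_add, mul_add, add_mul, fraction_expand_denom hplus_mul hminus_mul rel2 rel3 rel4,
    h, fraction_expand_denom hplus_mul hminus_mul rel2 rel3 rel4]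

theorem fraction_mul_fraction [Monoid S]
    (hplus_mul : ∀ s t : S, plus (s * t) = plus s * plus t)
    (hminus_mul : ∀ s t : S, minus (s * t) = minus t * minus s)
    (rel2 : ∀ (s : S) (a : A), φ a * minus s = minus s * φ (α s a))
    (rel3 : ∀ s : S, minus s * plus s = 1) (rel4 : ∀ s : S, plus s * minus s = φ (α s 1))
    (hmul : ∀ (t : S) (a b : A), α t (a * b) = α t a * α t b)
    (hcomp : ∀ (s t : S) (a : A), α (s * t) a = α s (α t a))
    {s t sh th : S} (h : sh * t = th * s) (a b : A) :
    (minus t * φ a * plus t) * (minus s * φ b * plus s) =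
      minus (sh * t) * φ (α sh (α t 1 * a * α t 1) * α th (α s 1 * b * α s 1)) *
        plus (sh * t) := by
  rw [← fraction_expand_denom hplus_mul hminus_mul rel2 rel3 rel4 sh t a,
    ← fraction_expand_denom hplus_mul hminus_mul rel2 rel3 rel4 th s b, ← h,
    fraction_mul_fraction_same_denom rel4, map_corner_mul_idem_mul hmul hcomp]

def fractionSubring [Monoid S]
    (hplus_mul : ∀ s t : S, plus (s * t) = plus s * plus t)
    (hminus_mul : ∀ s t : S, minus (s * t) = minus t * minus s)
    (rel2 : ∀ (s : S) (a : A), φ a * minus s = minus s * φ (α s a))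
    (rel3 : ∀ s : S, minus s * plus s = 1) (rel4 : ∀ s : S, plus s * minus s = φ (α s 1))
    (hmul : ∀ (t : S) (a b : A), α t (a * b) = α t a * α t b)
    (hcomp : ∀ (s t : S) (a : A), α (s * t) a = α s (α t a))
    (hOre : ∀ s t : S, ∃ sh th : S, sh * t = th * s) : Subring R where
  carrier := fractions φ plus minus
  one_mem' := ⟨1, 1, by rw [map_one, mul_one, rel3]⟩
  zero_mem' := ⟨1, 0, by rw [map_zero, mul_zero, zero_mul]⟩
  add_mem' := by
    rintro _ _ ⟨t, a, rfl⟩ ⟨s, b, rfl⟩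
    obtain ⟨sh, th, h⟩ := hOre s t
    exact ⟨_, _, fraction_add_fraction hplus_mul hminus_mul rel2 rel3 rel4 h a b⟩
  mul_mem' := by
    rintro _ _ ⟨t, a, rfl⟩ ⟨s, b, rfl⟩
    obtain ⟨sh, th, h⟩ := hOre s t
    exact ⟨_, _, fraction_mul_fraction hplus_mul hminus_mul rel2 rel3 rel4 hmul hcomp h a b⟩
  neg_mem' := by
    rintro _ ⟨s, a, rfl⟩
    exact ⟨s, -a, by rw [map_neg, mul_neg, neg_mul]⟩

end FractionalSkewMonoidRing

open FractionalSkewMonoidRing in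
theorem stmt4_general {A S R : Type*} [Ring A] [Monoid S] [Ring R]
    (α : S → A → A)
    (hmul : ∀ (t : S) (a b : A), α t (a * b) = α t a * α t b)
    (hcomp : ∀ (s t : S) (a : A), α (s * t) a = α s (α t a))
    (hOre : ∀ s t : S, ∃ sh th : S, sh * t = th * s)
    (φ : A →+* R)
    (plus minus : S → R)
    (hplus_mul : ∀ s t : S, plus (s * t) = plus s * plus t)
    (hminus_mul : ∀ s t : S, minus (s * t) = minus t * minus s)
    (rel2 : ∀ (s : S) (a : A), φ a * minus s = minus s * φ (α s a))
    (rel3 : ∀ s : S, minus s * plus s = 1)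
    (rel4 : ∀ s : S, plus s * minus s = φ (α s 1)) :
    (∃ B : Subring R,
        (B : Set R) = {x | ∃ (s : S) (a : A), x = minus s * φ a * plus s}) ∧
    (Set.range φ ⊆ {x | ∃ (s : S) (a : A), x = minus s * φ a * plus s}) ∧
    (∀ (s t sh th : S) (a b : A), sh * t = th * s →
      (minus t * φ a * plus t) * (minus s * φ b * plus s) =
        minus (sh * t) * φ (α sh (α t 1 * a * α t 1) * α th (α s 1 * b * α s 1)) *
          plus (sh * t) ∧
      (minus t * φ a * plus t) + (minus s * φ b * plus s) =
        minus (sh * t) * φ (α sh (α t 1 * a * α t 1) + α th (α s 1 * b * α s 1)) *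
          plus (sh * t)) :=
  ⟨⟨fractionSubring hplus_mul hminus_mul rel2 rel3 rel4 hmul hcomp hOre, rfl⟩,
    range_subset_fractions rel2 rel3 1,
    fun _ _ _ _ a b h =>
      ⟨fraction_mul_fraction hplus_mul hminus_mul rel2 rel3 rel4 hmul hcomp h a b,
        fraction_add_fraction hplus_mul hminus_mul rel2 rel3 rel4 h a b⟩⟩

/-- The set `S₋AS₊ = {s₋ φ(a) s₊}` is a unital subring of the fractional
skew monoid ring containing (the image of) `A` as a unital subring, with the concrete
product and sum formulas. -/
theorem stmt4 {A S R : Type*} [Ring A] [Monoid S] [Ring R]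
    (α : S → A → A)
    (hadd : ∀ (t : S) (a b : A), α t (a + b) = α t a + α t b)
    (hmul : ∀ (t : S) (a b : A), α t (a * b) = α t a * α t b)
    (hone : ∀ a : A, α 1 a = a)
    (hcomp : ∀ (s t : S) (a : A), α (s * t) a = α s (α t a))
    (hOre : ∀ s t : S, ∃ sh th : S, sh * t = th * s)
    (φ : A →+* R)
    (plus minus : S → R)
    (hplus_one : plus 1 = 1) (hplus_mul : ∀ s t : S, plus (s * t) = plus s * plus t)
    (hminus_one : minus 1 = 1) (hminus_mul : ∀ s t : S, minus (s * t) = minus t * minus s)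
    (rel1 : ∀ (t : S) (a : A), plus t * φ a = φ (α t a) * plus t)
    (rel2 : ∀ (s : S) (a : A), φ a * minus s = minus s * φ (α s a))
    (rel3 : ∀ s : S, minus s * plus s = 1)
    (rel4 : ∀ s : S, plus s * minus s = φ (α s 1)) :
    (∃ B : Subring R,
        (B : Set R) = {x | ∃ (s : S) (a : A), x = minus s * φ a * plus s}) ∧
    (Set.range φ ⊆ {x | ∃ (s : S) (a : A), x = minus s * φ a * plus s}) ∧
    (∀ (s t sh th : S) (a b : A), sh * t = th * s →
      (minus t * φ a * plus t) * (minus s * φ b * plus s) =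
        minus (sh * t) * φ (α sh (α t 1 * a * α t 1) * α th (α s 1 * b * α s 1)) *
          plus (sh * t) ∧
      (minus t * φ a * plus t) + (minus s * φ b * plus s) =
        minus (sh * t) * φ (α sh (α t 1 * a * α t 1) + α th (α s 1 * b * α s 1)) *
          plus (sh * t)) :=
  stmt4_general α hmul hcomp hOre φ plus minus hplus_mul hminus_mul rel2 rel3 rel4
end

section
/- The ring $S_- A S_+$ is isomorphic as a unital ring to the direct limit $\varinjlim_{t \in S} (p_t A p_t, \alpha_{\hat{s}}|_{p_t A p_t})$, where the connecting map from the copy indexed by $t$ to that indexed by $\hat{s} t$ is $\alpha_{\hat{s}}$ restricted to $p_t A p_t$, landing in $p_{\hat{s} t} A p_{\hat{s} t}$. -/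
/-!
Write `x ↦ u x v` for conjugation by `u = t₋`, `v = t₊`. Since `u v = 1`, the element
`v u = φ(p_t)` is idempotent and conjugation is multiplicative and injective on the corner
`(v u) R (v u)`, with left inverse `y ↦ v y u`; as `φ` maps `p_t A p_t` into that corner, each
`j t` is an injective unital ring homomorphism on `p_t A p_t`. The covariance relation
`s₊ φ(a) = φ(α_s a) s₊` gives `j t = j (ŝ t) ∘ α_ŝ`, the left Ore condition makes the images
directed, and `t₋ φ(a) t₊ = t₋ φ(p_t a p_t) t₊` shows that they exhaust `S₋AS₊`.
-/

section Conjugation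

variable {M : Type*} [Monoid M] {u v : M}

theorem isIdempotentElem_mul_of_mul_eq_one (h : u * v = 1) : IsIdempotentElem (v * u) := by
  rw [IsIdempotentElem, mul_assoc, ← mul_assoc u, h, one_mul]

theorem conj_conj_eq_self_of_mem_corner {x : M} (hx : x = v * u * x * (v * u)) :
    v * (u * x * v) * u = x := by
  conv_rhs => rw [hx]
  simp only [mul_assoc]

theorem injOn_conj_corner : Set.InjOn (fun x => u * x * v) {x | x = v * u * x * (v * u)} :=
  fun x hx y hy hxy => by
    rw [← conj_conj_eq_self_of_mem_corner hx, ← conj_conj_eq_self_of_mem_corner hy]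
    exact congrArg (v * · * u) hxy

theorem conj_mul_conj_of_mem_corner (h : u * v = 1) {x : M} (hx : x = v * u * x * (v * u))
    (y : M) :
    u * x * v * (u * y * v) = u * (x * y) * v := by
  have hxe : x * (v * u) = x := by
    rw [hx, mul_assoc _ (v * u), (isIdempotentElem_mul_of_mul_eq_one h).eq]
  calc u * x * v * (u * y * v) = u * (x * (v * u) * y) * v := by simp only [mul_assoc]
    _ = u * (x * y) * v := by rw [hxe]

theorem conj_idem_eq_one (h : u * v = 1) : u * (v * u) * v = 1 := by
  rw [← mul_assoc, h, one_mul, h]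

theorem conj_corner_eq_conj (h : u * v = 1) (x : M) :
    u * (v * u * x * (v * u)) * v = u * x * v := by
  simp only [← mul_assoc, h, one_mul]
  simp only [mul_assoc, h, mul_one]

theorem conj_eq_of_mul_eq_mul (h : u * v = 1) {x y : M} (hxy : v * x = y * v) :
    u * y * v = x := by
  rw [mul_assoc, ← hxy, ← mul_assoc, h, one_mul]

end Conjugation

theorem IsIdempotentElem.mul_mul_mem_corner {M : Type*} [Semigroup M] {e : M}
    (he : IsIdempotentElem e) (x : M) : e * x * e = e * (e * x * e) * e := by
  simp only [← mul_assoc, he.eq]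
  simp only [mul_assoc, he.eq]

theorem map_mem_corner_mul {A S : Type*} [Mul A] [One A] [Mul S] (α : S → A → A)
    (hmul : ∀ (t : S) (a b : A), α t (a * b) = α t a * α t b)
    (hcomp : ∀ (s t : S) (a : A), α (s * t) a = α s (α t a))
    {t : S} {a : A} (ha : a = α t 1 * a * α t 1) (s : S) :
    α s a = α (s * t) 1 * α s a * α (s * t) 1 := by
  rw [hcomp, ← hmul, ← hmul, ← ha]

theorem stmt6_general {A S R : Type*} [Ring A] [Monoid S] [Ring R]
    (α : S → A → A)
    (hmul : ∀ (t : S) (a b : A), α t (a * b) = α t a * α t b)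
    (hcomp : ∀ (s t : S) (a : A), α (s * t) a = α s (α t a))
    (hOre : ∀ s t : S, ∃ sh th : S, sh * t = th * s)
    (φ : A →+* R) (hφ : Function.Injective φ)
    (plus minus : S → R)
    (hplus_mul : ∀ s t : S, plus (s * t) = plus s * plus t)
    (hminus_mul : ∀ s t : S, minus (s * t) = minus t * minus s)
    (rel1 : ∀ (t : S) (a : A), plus t * φ a = φ (α t a) * plus t)
    (rel3 : ∀ s : S, minus s * plus s = 1)
    (rel4 : ∀ s : S, plus s * minus s = φ (α s 1)) :
    -- corners `C t = p_t A p_t` and maps `j t = t₋ φ(·) t₊`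
    letI C : S → Set A := fun t => {a | a = α t 1 * a * α t 1}
    letI j : S → A → R := fun t a => minus t * φ a * plus t
    -- each `j t` is an injective unital ring homomorphism on the corner `C t`
    (∀ t : S, Set.InjOn (j t) (C t)) ∧
    (∀ t : S, j t (α t 1) = 1) ∧
    (∀ (t : S) (a b : A), a ∈ C t → b ∈ C t →
      j t (a * b) = j t a * j t b ∧ j t (a + b) = j t a + j t b) ∧
    -- the connecting maps `α_ŝ` carry `C t` into `C (ŝ t)` and are compatible with `j`
    (∀ (t sh : S) (a : A), a ∈ C t → α sh a ∈ C (sh * t)) ∧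
    (∀ (t sh : S) (a : A), a ∈ C t → j t a = j (sh * t) (α sh a)) ∧
    -- the images form a directed family
    (∀ t t' : S, ∃ u : S, j t '' C t ⊆ j u '' C u ∧ j t' '' C t' ⊆ j u '' C u) ∧
    -- whose union is exactly `S₋AS₊`
    ({x | ∃ (s : S) (a : A), x = minus s * φ a * plus s} = ⋃ t : S, j t '' C t) := by
  beta_reduce
  have map_corner {t : S} {a : A} (ha : a = α t 1 * a * α t 1) :
      φ a = plus t * minus t * φ a * (plus t * minus t) := by
    rw [rel4, ← map_mul, ← map_mul, ← ha]
  have compat (t s : S) (a : A) :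
      minus t * φ a * plus t = minus (s * t) * φ (α s a) * plus (s * t) := by
    rw [hminus_mul, hplus_mul, ← conj_eq_of_mul_eq_mul (rel3 s) (rel1 s a)]
    simp only [mul_assoc]
  have image_mono (t s : S) :
      (fun a => minus t * φ a * plus t) '' {a | a = α t 1 * a * α t 1} ⊆
        (fun a => minus (s * t) * φ a * plus (s * t)) ''
          {a | a = α (s * t) 1 * a * α (s * t) 1} := by
    rintro _ ⟨a, ha, rfl⟩
    exact ⟨α s a, map_mem_corner_mul α hmul hcomp ha s, (compat t s a).symm⟩
  refine ⟨fun t a ha b hb hab => hφ (injOn_conj_corner (map_corner ha) (map_corner hb) hab),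
    fun t => ?_, fun t a b ha _ => ⟨?_, ?_⟩, fun t s a ha => map_mem_corner_mul α hmul hcomp ha s,
    fun t s a _ => compat t s a, fun t t' => ?_, ?_⟩
  · rw [← rel4, conj_idem_eq_one (rel3 t)]
  · rw [map_mul, conj_mul_conj_of_mem_corner (rel3 t) (map_corner ha)]
  · rw [map_add, mul_add, add_mul]
  · obtain ⟨s, s', hss'⟩ := hOre t t'
    exact ⟨s' * t, image_mono t s', hss' ▸ image_mono t' s⟩
  · ext x
    simp only [Set.mem_ofPred_eq, Set.mem_iUnion, Set.mem_image]
    constructor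
    · rintro ⟨s, a, rfl⟩
      refine ⟨s, α s 1 * a * α s 1, ?_, ?_⟩
      · exact IsIdempotentElem.mul_mul_mem_corner (by rw [IsIdempotentElem, ← hmul, one_mul]) a
      · rw [map_mul, map_mul, ← rel4, conj_corner_eq_conj (rel3 s)]
    · rintro ⟨t, a, -, rfl⟩
      exact ⟨t, a, rfl⟩

/-- `S₋AS₊` is isomorphic to the direct limit
`⭢lim (p_t A p_t, α_ŝ|_{p_t A p_t})`.  This is formalized via the standard presentation
of a direct limit of a directed system of injective unital ring homomorphisms as a
directed union: the maps `j_t : p_t A p_t → R`, `a ↦ t₋ φ(a) t₊` are injective unital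
ring homomorphisms on the corners, compatible with the connecting maps
`α_ŝ : p_t A p_t → p_{ŝt} A p_{ŝt}`, their images form a directed family, and their
union is exactly `S₋AS₊`. -/
theorem stmt6 {A S R : Type*} [Ring A] [Monoid S] [Ring R]
    (α : S → A → A)
    (hadd : ∀ (t : S) (a b : A), α t (a + b) = α t a + α t b)
    (hmul : ∀ (t : S) (a b : A), α t (a * b) = α t a * α t b)
    (hone : ∀ a : A, α 1 a = a)
    (hcomp : ∀ (s t : S) (a : A), α (s * t) a = α s (α t a))
    (hinj : ∀ s : S, Function.Injective (α s))
    (hOre : ∀ s t : S, ∃ sh th : S, sh * t = th * s)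
    (φ : A →+* R) (hφ : Function.Injective φ)
    (plus minus : S → R)
    (hplus_one : plus 1 = 1) (hplus_mul : ∀ s t : S, plus (s * t) = plus s * plus t)
    (hminus_one : minus 1 = 1) (hminus_mul : ∀ s t : S, minus (s * t) = minus t * minus s)
    (rel1 : ∀ (t : S) (a : A), plus t * φ a = φ (α t a) * plus t)
    (rel2 : ∀ (s : S) (a : A), φ a * minus s = minus s * φ (α s a))
    (rel3 : ∀ s : S, minus s * plus s = 1)
    (rel4 : ∀ s : S, plus s * minus s = φ (α s 1)) :
    -- corners `C t = p_t A p_t` and maps `j t = t₋ φ(·) t₊`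
    letI C : S → Set A := fun t => {a | a = α t 1 * a * α t 1}
    letI j : S → A → R := fun t a => minus t * φ a * plus t
    -- each `j t` is an injective unital ring homomorphism on the corner `C t`
    (∀ t : S, Set.InjOn (j t) (C t)) ∧
    (∀ t : S, j t (α t 1) = 1) ∧
    (∀ (t : S) (a b : A), a ∈ C t → b ∈ C t →
      j t (a * b) = j t a * j t b ∧ j t (a + b) = j t a + j t b) ∧
    -- the connecting maps `α_ŝ` carry `C t` into `C (ŝ t)` and are compatible with `j`
    (∀ (t sh : S) (a : A), a ∈ C t → α sh a ∈ C (sh * t)) ∧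
    (∀ (t sh : S) (a : A), a ∈ C t → j t a = j (sh * t) (α sh a)) ∧
    -- the images form a directed family
    (∀ t t' : S, ∃ u : S, j t '' C t ⊆ j u '' C u ∧ j t' '' C t' ⊆ j u '' C u) ∧
    -- whose union is exactly `S₋AS₊`
    ({x | ∃ (s : S) (a : A), x = minus s * φ a * plus s} = ⋃ t : S, j t '' C t) :=
  stmt6_general α hmul hcomp hOre φ hφ plus minus hplus_mul hminus_mul rel1 rel3 rel4
end

section
/- For each $s \in S$, the rule $\overline{\alpha}_s(t_- a t_+) := s_+ t_- a t_+ s_-$ gives a well-defined injective ring endomorphism of $S_- A S_+$, the assignment $s \mapsto \overline{\alpha}_s$ is a monoid action of $S$ on $S_- A S_+$, and each $\overline{\alpha}_s$ is a corner isomorphism: $\overline{\alpha}_s(S_- A S_+) = p_s (S_- A S_+) p_s$. -/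
/-! The relations `s₋ s₊ = 1` and `s₊ s₋ = p_s` make `x ↦ s₊ x s₋` a multiplicative injection
with left inverse `x ↦ s₋ x s₊` and image in the corner of `p_s`. The only nontrivial point is
that `S₋AS₊` is stable: for `s₊ t₋` one uses an Ore pair `u t = v s`, so that
`s₊ t₋ = v₋ v₊ s₊ t₋ = v₋ u₊ t₊ t₋ = v₋ α_u(p_t) u₊`, and `u₊` then moves past `A` to the right,
where `u₊ t₊ s₋ = v₊ s₊ s₋ = v₊ p_s`. -/

section Conjugation

variable {R : Type*} [Ring R] {p m : R}

theorem conj_mul_conj_of_mul_eq_one (h : m * p = 1) (x y : R) :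
    p * x * m * (p * y * m) = p * (x * y) * m := by
  simp only [mul_assoc, ← mul_assoc m p, h, one_mul]

theorem conj_conj_of_mul_eq_one (h : m * p = 1) (x : R) : m * (p * x * m) * p = x := by
  simp only [mul_assoc, ← mul_assoc m p, h, one_mul, mul_one]

theorem conj_injective_of_mul_eq_one (h : m * p = 1) : Function.Injective fun x => p * x * m :=
  Function.LeftInverse.injective (g := fun y => m * y * p) (conj_conj_of_mul_eq_one h)

theorem corner_conj_of_mul_eq_one (h : m * p = 1) (x : R) :
    p * m * (p * x * m) * (p * m) = p * x * m := by
  simp only [mul_assoc, ← mul_assoc m p, h, one_mul]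

end Conjugation

section FractionSet

variable {A S R : Type*} [Ring A] [Monoid S] [Ring R]

/-- `S₋AS₊`, writing `plus s`, `minus s` for `s₊`, `s₋`. -/
def fractionSet (φ : A →+* R) (plus minus : S → R) : Set R :=
  {x | ∃ (s : S) (a : A), x = minus s * φ a * plus s}

theorem plus_mul_minus_of_ore (α : S → A → A) (φ : A →+* R) (plus minus : S → R)
    (hplus_mul : ∀ s t : S, plus (s * t) = plus s * plus t)
    (rel1 : ∀ (t : S) (a : A), plus t * φ a = φ (α t a) * plus t)
    (rel3 : ∀ s : S, minus s * plus s = 1)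
    (rel4 : ∀ s : S, plus s * minus s = φ (α s 1))
    {s t u v : S} (hore : u * t = v * s) :
    plus s * minus t = minus v * φ (α u (α t 1)) * plus u :=
  calc plus s * minus t = minus v * (plus v * plus s) * minus t := by
        rw [← mul_assoc, rel3, one_mul]
    _ = minus v * (plus u * (plus t * minus t)) := by
        rw [← hplus_mul, ← hore, hplus_mul]; simp only [mul_assoc]
    _ = minus v * φ (α u (α t 1)) * plus u := by
        rw [rel4, rel1, mul_assoc]

theorem conj_mem_fractionSet (α : S → A → A)
    (hOre : ∀ s t : S, ∃ sh th : S, sh * t = th * s)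
    (φ : A →+* R) (plus minus : S → R)
    (hplus_mul : ∀ s t : S, plus (s * t) = plus s * plus t)
    (rel1 : ∀ (t : S) (a : A), plus t * φ a = φ (α t a) * plus t)
    (rel3 : ∀ s : S, minus s * plus s = 1)
    (rel4 : ∀ s : S, plus s * minus s = φ (α s 1))
    (s : S) {x : R} (hx : x ∈ fractionSet φ plus minus) :
    plus s * x * minus s ∈ fractionSet φ plus minus := by
  obtain ⟨t, a, rfl⟩ := hx
  obtain ⟨u, v, hore⟩ := hOre s t
  refine ⟨v, α u (α t 1) * α u a * α v (α s 1), ?_⟩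
  have key := plus_mul_minus_of_ore α φ plus minus hplus_mul rel1 rel3 rel4 hore
  calc plus s * (minus t * φ a * plus t) * minus s
      = plus s * minus t * φ a * plus t * minus s := by simp only [mul_assoc]
    _ = minus v * φ (α u (α t 1)) * (plus u * φ a) * plus t * minus s := by
        rw [key]; simp only [mul_assoc]
    _ = minus v * φ (α u (α t 1) * α u a) * (plus u * plus t * minus s) := by
        rw [rel1, map_mul]; simp only [mul_assoc]
    _ = minus v * φ (α u (α t 1) * α u a) * (plus v * (plus s * minus s)) := by
        rw [← hplus_mul u, hore, hplus_mul]; simp only [mul_assoc]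
    _ = minus v * φ (α u (α t 1) * α u a * α v (α s 1)) * plus v := by
        rw [rel4, rel1]; simp only [map_mul, mul_assoc]

theorem minus_conj_mem_fractionSet (φ : A →+* R) (plus minus : S → R)
    (hplus_mul : ∀ s t : S, plus (s * t) = plus s * plus t)
    (hminus_mul : ∀ s t : S, minus (s * t) = minus t * minus s)
    (s : S) {x : R} (hx : x ∈ fractionSet φ plus minus) :
    minus s * x * plus s ∈ fractionSet φ plus minus := by
  obtain ⟨t, a, rfl⟩ := hx
  exact ⟨t * s, a, by simp only [hminus_mul, hplus_mul, mul_assoc]⟩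

end FractionSet

theorem stmt7_general {A S R : Type*} [Ring A] [Monoid S] [Ring R]
    (α : S → A → A)
    (hOre : ∀ s t : S, ∃ sh th : S, sh * t = th * s)
    (φ : A →+* R)
    (plus minus : S → R)
    (hplus_one : plus 1 = 1) (hplus_mul : ∀ s t : S, plus (s * t) = plus s * plus t)
    (hminus_one : minus 1 = 1) (hminus_mul : ∀ s t : S, minus (s * t) = minus t * minus s)
    (rel1 : ∀ (t : S) (a : A), plus t * φ a = φ (α t a) * plus t)
    (rel3 : ∀ s : S, minus s * plus s = 1)
    (rel4 : ∀ s : S, plus s * minus s = φ (α s 1)) :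
    letI B : Set R := {x | ∃ (s : S) (a : A), x = minus s * φ a * plus s}
    letI bar : S → R → R := fun s x => plus s * x * minus s
    (∀ s : S, Set.MapsTo (bar s) B B) ∧
    (∀ s : S, Set.InjOn (bar s) B) ∧
    (∀ (s : S) (x y : R), x ∈ B → y ∈ B →
      bar s (x * y) = bar s x * bar s y ∧ bar s (x + y) = bar s x + bar s y) ∧
    (∀ x ∈ B, bar 1 x = x) ∧
    (∀ (s t : S), ∀ x ∈ B, bar (s * t) x = bar s (bar t x)) ∧
    (∀ s : S, bar s '' B = (fun x => φ (α s 1) * x * φ (α s 1)) '' B) := by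
  have hmaps (s : S) : Set.MapsTo (fun x => plus s * x * minus s)
      (fractionSet φ plus minus) (fractionSet φ plus minus) := fun _ hx =>
    conj_mem_fractionSet α hOre φ plus minus hplus_mul rel1 rel3 rel4 s hx
  refine ⟨hmaps, fun s => (conj_injective_of_mul_eq_one (rel3 s)).injOn,
    fun s x y _ _ =>
      ⟨(conj_mul_conj_of_mul_eq_one (rel3 s) x y).symm, by simp only [mul_add, add_mul]⟩,
    fun x _ => by simp only [hplus_one, hminus_one, one_mul, mul_one],
    fun s t x _ => by simp only [hplus_mul, hminus_mul, mul_assoc], fun s => ?_⟩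
  ext y
  constructor
  · rintro ⟨x, hx, rfl⟩
    exact ⟨_, hmaps s hx, by simp only [← rel4, corner_conj_of_mul_eq_one (rel3 s)]⟩
  · rintro ⟨x, hx, rfl⟩
    refine ⟨minus s * x * plus s,
      minus_conj_mem_fractionSet φ plus minus hplus_mul hminus_mul s hx, ?_⟩
    simp only [← rel4, mul_assoc]

/-- For each `s ∈ S`, `ᾱ_s(x) := s₊ x s₋` is a well-defined injective ring
endomorphism of `S₋AS₊`, `s ↦ ᾱ_s` is a monoid action, and each `ᾱ_s` is a corner
isomorphism: `ᾱ_s(S₋AS₊) = p_s (S₋AS₊) p_s`. -/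
theorem stmt7 {A S R : Type*} [Ring A] [Monoid S] [Ring R]
    (α : S → A → A)
    (hadd : ∀ (t : S) (a b : A), α t (a + b) = α t a + α t b)
    (hmul : ∀ (t : S) (a b : A), α t (a * b) = α t a * α t b)
    (hone : ∀ a : A, α 1 a = a)
    (hcomp : ∀ (s t : S) (a : A), α (s * t) a = α s (α t a))
    (hinj : ∀ s : S, Function.Injective (α s))
    (hOre : ∀ s t : S, ∃ sh th : S, sh * t = th * s)
    (φ : A →+* R) (hφ : Function.Injective φ)
    (plus minus : S → R)
    (hplus_one : plus 1 = 1) (hplus_mul : ∀ s t : S, plus (s * t) = plus s * plus t)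
    (hminus_one : minus 1 = 1) (hminus_mul : ∀ s t : S, minus (s * t) = minus t * minus s)
    (rel1 : ∀ (t : S) (a : A), plus t * φ a = φ (α t a) * plus t)
    (rel2 : ∀ (s : S) (a : A), φ a * minus s = minus s * φ (α s a))
    (rel3 : ∀ s : S, minus s * plus s = 1)
    (rel4 : ∀ s : S, plus s * minus s = φ (α s 1)) :
    letI B : Set R := {x | ∃ (s : S) (a : A), x = minus s * φ a * plus s}
    letI bar : S → R → R := fun s x => plus s * x * minus s
    (∀ s : S, Set.MapsTo (bar s) B B) ∧
    (∀ s : S, Set.InjOn (bar s) B) ∧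
    (∀ (s : S) (x y : R), x ∈ B → y ∈ B →
      bar s (x * y) = bar s x * bar s y ∧ bar s (x + y) = bar s x + bar s y) ∧
    (∀ x ∈ B, bar 1 x = x) ∧
    (∀ (s t : S), ∀ x ∈ B, bar (s * t) x = bar s (bar t x)) ∧
    (∀ s : S, bar s '' B = (fun x => φ (α s 1) * x * φ (α s 1)) '' B) :=
  stmt7_general α hOre φ plus minus hplus_one hplus_mul hminus_one hminus_mul rel1 rel3 rel4
end

section
/- If the action $\alpha$ of $S$ on $A$ is by unital injective ring endomorphisms, then the extended action $\overline{\alpha}_s$ on $S_- A S_+$ is a ring automorphism for every $s \in S$. -/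
/-!
Since `α s` is unital, `s₊ s₋ = α_s(1) = 1`, so `s₊` is a unit of `R` with inverse `s₋` and `ᾱ_s`
is conjugation by a unit, a ring automorphism of `R`. It maps `S₋AS₊` onto itself: for `t₋ a t₊`
the left Ore condition gives `u s = v t`, whence `s₊ t₋ = u₋ v₊` and
`ᾱ_s (t₋ a t₊) = u₋ α_v(a) u₊`; conversely `t₋ a t₊ = ᾱ_s ((ts)₋ a (ts)₊)`.
-/

section FractionalSkewMonoidRing

variable {A S R : Type*} [Monoid S] [Ring R] {plus minus : S → R}

theorem plus_mul_minus_of_mul_eq (hplus_mul : ∀ s t : S, plus (s * t) = plus s * plus t)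
    (hminus_plus : ∀ s : S, minus s * plus s = 1) (hplus_minus : ∀ s : S, plus s * minus s = 1)
    {s t u v : S} (huv : u * s = v * t) :
    plus s * minus t = minus u * plus v := by
  calc plus s * minus t = minus u * plus (u * s) * minus t := by
        rw [hplus_mul, ← mul_assoc, hminus_plus, one_mul]
    _ = minus u * plus v * (plus t * minus t) := by
        rw [huv, hplus_mul]; simp only [mul_assoc]
    _ = minus u * plus v := by rw [hplus_minus, mul_one]

theorem conj_minus_mul_plus_of_mul_eq [Ring A] (α : S → A → A) (φ : A →+* R)
    (hplus_mul : ∀ s t : S, plus (s * t) = plus s * plus t)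
    (hminus_plus : ∀ s : S, minus s * plus s = 1) (hplus_minus : ∀ s : S, plus s * minus s = 1)
    (rel1 : ∀ (t : S) (a : A), plus t * φ a = φ (α t a) * plus t)
    {s t u v : S} (huv : u * s = v * t) (a : A) :
    plus s * (minus t * φ a * plus t) * minus s = minus u * φ (α v a) * plus u := by
  have hplus : plus v * plus t * minus s = plus u := by
    rw [← hplus_mul, ← huv, hplus_mul, mul_assoc, hplus_minus, mul_one]
  calc plus s * (minus t * φ a * plus t) * minus s
      = plus s * minus t * φ a * plus t * minus s := by simp only [mul_assoc]
    _ = minus u * (plus v * φ a) * plus t * minus s := by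
        rw [plus_mul_minus_of_mul_eq hplus_mul hminus_plus hplus_minus huv, mul_assoc (minus u)]
    _ = minus u * φ (α v a) * (plus v * plus t * minus s) := by
        rw [rel1]; simp only [mul_assoc]
    _ = minus u * φ (α v a) * plus u := by rw [hplus]

theorem conj_minus_mul_plus_mul_right (hplus_mul : ∀ s t : S, plus (s * t) = plus s * plus t)
    (hminus_mul : ∀ s t : S, minus (s * t) = minus t * minus s)
    (hplus_minus : ∀ s : S, plus s * minus s = 1) (s t : S) (x : R) :
    plus s * (minus (t * s) * x * plus (t * s)) * minus s = minus t * x * plus t := by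
  rw [hminus_mul, hplus_mul]
  simp only [← mul_assoc, hplus_minus, one_mul]
  simp only [mul_assoc, hplus_minus, mul_one]

end FractionalSkewMonoidRing

theorem stmt8_general {A S R : Type*} [Ring A] [Monoid S] [Ring R]
    (α : S → A → A)
    (hunital : ∀ s : S, α s 1 = 1)
    (hOre : ∀ s t : S, ∃ sh th : S, sh * t = th * s)
    (φ : A →+* R)
    (plus minus : S → R)
    (hplus_mul : ∀ s t : S, plus (s * t) = plus s * plus t)
    (hminus_mul : ∀ s t : S, minus (s * t) = minus t * minus s)
    (rel1 : ∀ (t : S) (a : A), plus t * φ a = φ (α t a) * plus t)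
    (rel3 : ∀ s : S, minus s * plus s = 1)
    (rel4 : ∀ s : S, plus s * minus s = φ (α s 1)) :
    letI B : Set R := {x | ∃ (s : S) (a : A), x = minus s * φ a * plus s}
    letI bar : S → R → R := fun s x => plus s * x * minus s
    ∀ s : S, Set.BijOn (bar s) B B ∧
      (∀ x y : R, x ∈ B → y ∈ B →
        bar s (x * y) = bar s x * bar s y ∧ bar s (x + y) = bar s x + bar s y) := by
  intro s
  have hplus_minus (r : S) : plus r * minus r = 1 := by rw [rel4, hunital, map_one]
  let conj : R ≃+* R := MulSemiringAction.toRingEquiv (ConjAct Rˣ) R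
    (ConjAct.toConjAct ⟨plus s, minus s, hplus_minus s, rel3 s⟩)
  refine ⟨⟨?_, conj.injective.injOn, ?_⟩,
    fun x y _ _ => ⟨map_mul conj x y, map_add conj x y⟩⟩
  · rintro _ ⟨t, a, rfl⟩
    obtain ⟨u, v, huv⟩ := hOre t s
    exact ⟨u, α v a, conj_minus_mul_plus_of_mul_eq α φ hplus_mul rel3 hplus_minus rel1 huv a⟩
  · rintro _ ⟨t, a, rfl⟩
    exact ⟨_, ⟨t * s, a, rfl⟩,
      conj_minus_mul_plus_mul_right hplus_mul hminus_mul hplus_minus s t (φ a)⟩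

/-- If the action `α` is by unital injective endomorphisms, then each
extended map `ᾱ_s(x) = s₊ x s₋` is a ring automorphism of `S₋AS₊` (an additive and
multiplicative bijection of `S₋AS₊` onto itself). -/
theorem stmt8 {A S R : Type*} [Ring A] [Monoid S] [Ring R]
    (α : S → A → A)
    (hadd : ∀ (t : S) (a b : A), α t (a + b) = α t a + α t b)
    (hmul : ∀ (t : S) (a b : A), α t (a * b) = α t a * α t b)
    (hone : ∀ a : A, α 1 a = a)
    (hcomp : ∀ (s t : S) (a : A), α (s * t) a = α s (α t a))
    (hinj : ∀ s : S, Function.Injective (α s))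
    (hunital : ∀ s : S, α s 1 = 1)
    (hOre : ∀ s t : S, ∃ sh th : S, sh * t = th * s)
    (φ : A →+* R) (hφ : Function.Injective φ)
    (plus minus : S → R)
    (hplus_one : plus 1 = 1) (hplus_mul : ∀ s t : S, plus (s * t) = plus s * plus t)
    (hminus_one : minus 1 = 1) (hminus_mul : ∀ s t : S, minus (s * t) = minus t * minus s)
    (rel1 : ∀ (t : S) (a : A), plus t * φ a = φ (α t a) * plus t)
    (rel2 : ∀ (s : S) (a : A), φ a * minus s = minus s * φ (α s a))
    (rel3 : ∀ s : S, minus s * plus s = 1)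
    (rel4 : ∀ s : S, plus s * minus s = φ (α s 1)) :
    letI B : Set R := {x | ∃ (s : S) (a : A), x = minus s * φ a * plus s}
    letI bar : S → R → R := fun s x => plus s * x * minus s
    ∀ s : S, Set.BijOn (bar s) B B ∧
      (∀ x y : R, x ∈ B → y ∈ B →
        bar s (x * y) = bar s x * bar s y ∧ bar s (x + y) = bar s x + bar s y) :=
  stmt8_general α hunital hOre φ plus minus hplus_mul hminus_mul rel1 rel3 rel4
end

section
/- With the extended action $\overline{\alpha}$ of $S$ on $B := S_- A S_+$, the fractional skew monoid rings coincide: $S^{op} *_\alpha A *_\alpha S = S^{op} *_{\overline{\alpha}} B *_{\overline{\alpha}} S$. That is, the inclusion $\iota: B \hookrightarrow S^{op} *_\alpha A *_\alpha S$ together with the maps $s \mapsto s_\pm$ satisfies the defining relations of $S^{op} *_{\overline{\alpha}} B *_{\overline{\alpha}} S$, and the induced homomorphism $S^{op} *_{\overline{\alpha}} B *_{\overline{\alpha}} S \to S^{op} *_\alpha A *_\alpha S$ is an isomorphism. -/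
universe u v w

/-- The defining relations of the fractional skew monoid ring `Sᵒᵖ *_α A *_α S`
(case `S = T`), for a unital ring homomorphism `φ`, a multiplicative map `plus` and an
antimultiplicative map `minus`. -/
def FSMRRelations {A : Type u} {S : Type v} {R : Type w} [Ring A] [Monoid S] [Ring R]
    (α : S → A → A) (φ : A → R) (minus plus : S → R) : Prop :=
  (∀ a b : A, φ (a + b) = φ a + φ b) ∧ (∀ a b : A, φ (a * b) = φ a * φ b) ∧ φ 1 = 1 ∧
  plus 1 = 1 ∧ (∀ s t : S, plus (s * t) = plus s * plus t) ∧
  minus 1 = 1 ∧ (∀ s t : S, minus (s * t) = minus t * minus s) ∧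
  (∀ (t : S) (a : A), plus t * φ a = φ (α t a) * plus t) ∧
  (∀ (s : S) (a : A), φ a * minus s = minus s * φ (α s a)) ∧
  (∀ s : S, minus s * plus s = 1) ∧
  (∀ s : S, plus s * minus s = φ (α s 1))

/-- `R` (with the data `φ`, `minus`, `plus`) is *the* fractional skew monoid ring
`Sᵒᵖ *_α A *_α S`: it satisfies the relations and is universal with respect to them. -/
def IsFSMR {A : Type u} {S : Type v} {R : Type w} [Ring A] [Monoid S] [Ring R]
    (α : S → A → A) (φ : A → R) (minus plus : S → R) : Prop :=
  FSMRRelations α φ minus plus ∧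
  ∀ (R' : Type (max u v w)) [Ring R'] (φ' : A → R') (minus' plus' : S → R'),
    FSMRRelations α φ' minus' plus' →
    ∃! ψ : R →+* R', (∀ a : A, ψ (φ a) = φ' a) ∧
      (∀ s : S, ψ (minus s) = minus' s) ∧ (∀ s : S, ψ (plus s) = plus' s)
/-!
A representation `(φ', s ↦ s'₋, s'₊)` of `(B, ᾱ)` restricts along `A ⊆ B` to a representation of
`(A, α)`, which lifts uniquely to `R`. The lift agrees with `φ'` on all of `B`, because
`φ'(s₋ a s₊) = s'₋ φ'(a) s'₊` holds although `s₋, s₊` need not lie in `B`; and any ring map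
agreeing with `φ'` on `B` agrees with it on `A`, so it is the same lift.
-/

namespace FSMRRelations

variable {A : Type u} {S : Type v} {R : Type w} [Ring A] [Monoid S] [Ring R]
  {α : S → A → A} {φ : A → R} {minus plus : S → R}

theorem map {R' : Type*} [Ring R'] (h : FSMRRelations α φ minus plus) (f : R →+* R') :
    FSMRRelations α (f ∘ φ) (f ∘ minus) (f ∘ plus) := by
  obtain ⟨hadd, hmul, hone, hp1, hpmul, hm1, hmmul, hpφ, hφm, hmp, hpm⟩ := h
  refine ⟨?_, ?_, ?_, ?_, ?_, ?_, ?_, ?_, ?_, ?_, ?_⟩ <;> intros <;>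
    simp only [Function.comp_apply, ← map_mul, ← map_add, ← map_one f, *]

theorem plus_mul_mul_minus (h : FSMRRelations α φ minus plus) (s : S) (a : A) :
    plus s * φ a * minus s = φ (α s a) * φ (α s 1) := by
  obtain ⟨-, -, -, -, -, -, -, hpφ, -, -, hpm⟩ := h
  rw [hpφ, mul_assoc, hpm]

theorem plus_mul_mul_minus' (h : FSMRRelations α φ minus plus) (s : S) (a : A) :
    plus s * φ a * minus s = φ (α s 1) * φ (α s a) := by
  obtain ⟨-, -, -, -, -, -, -, -, hφm, -, hpm⟩ := h
  rw [mul_assoc, hφm, ← mul_assoc, hpm]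

section Subring

variable (B : Subring R) (hmem : ∀ (s : S) (x : R), x ∈ B → plus s * x * minus s ∈ B)

/-- `ᾱ_s(x) = s₊ x s₋` on a subring `B` closed under it. -/
abbrev conjAct : S → B → B := fun s x => ⟨plus s * (x : R) * minus s, hmem s x x.2⟩

theorem subring_conjAct (h : FSMRRelations α φ minus plus) :
    FSMRRelations (conjAct B hmem) (fun x : B => (x : R)) minus plus := by
  obtain ⟨-, -, -, hp1, hpmul, hm1, hmmul, -, -, hmp, -⟩ := h
  refine ⟨fun _ _ => rfl, fun _ _ => rfl, rfl, hp1, hpmul, hm1, hmmul, fun t x => ?_,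
    fun s x => ?_, hmp, fun s => ?_⟩
  · show plus t * x = plus t * x * minus t * plus t
    rw [mul_assoc _ (minus t), hmp, mul_one]
  · show x * minus s = minus s * (plus s * x * minus s)
    rw [← mul_assoc, ← mul_assoc, hmp, one_mul]
  · show plus s * minus s = plus s * 1 * minus s
    rw [mul_one]

variable {B} {R' : Type*} [Ring R'] {φ' : B → R'} {minus' plus' : S → R'}

theorem apply_eq_plus_mul_minus (h : FSMRRelations α φ minus plus) (hφB : ∀ a, φ a ∈ B)
    (h' : FSMRRelations (conjAct B hmem) φ' minus' plus') (s : S) :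
    φ' ⟨φ (α s 1), hφB _⟩ = plus' s * minus' s := by
  obtain ⟨-, -, -, -, -, -, -, -, -, -, hpm⟩ := h
  have hone : conjAct B hmem s 1 = ⟨φ (α s 1), hφB _⟩ :=
    Subtype.ext (show plus s * 1 * minus s = φ (α s 1) by rw [mul_one, hpm])
  obtain ⟨-, -, -, -, -, -, -, -, -, -, h'pm⟩ := h'
  rw [h'pm, hone]

theorem restrict (h : FSMRRelations α φ minus plus) (hφB : ∀ a, φ a ∈ B)
    (h' : FSMRRelations (conjAct B hmem) φ' minus' plus') :
    FSMRRelations α (fun a => φ' ⟨φ a, hφB a⟩) minus' plus' := by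
  set ι : A → B := fun a => ⟨φ a, hφB a⟩
  have hconj (s : S) (a : A) : conjAct B hmem s (ι a) = ι (α s a) * ι (α s 1) :=
    Subtype.ext (h.plus_mul_mul_minus s a)
  have hconj' (s : S) (a : A) : conjAct B hmem s (ι a) = ι (α s 1) * ι (α s a) :=
    Subtype.ext (h.plus_mul_mul_minus' s a)
  have hpm' := apply_eq_plus_mul_minus hmem h hφB h'
  obtain ⟨hadd, hmul, hone, -, -, -, -, -, -, -, -⟩ := h
  obtain ⟨h'add, h'mul, h'one, hp1, hpmul, hm1, hmmul, hpφ, hφm, hmp, -⟩ := h'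
  refine ⟨fun a b => ?_, fun a b => ?_, ?_, hp1, hpmul, hm1, hmmul, fun t a => ?_,
    fun s a => ?_, hmp, fun s => (hpm' s).symm⟩
  · rw [← h'add]; exact congrArg φ' (Subtype.ext (hadd a b))
  · rw [← h'mul]; exact congrArg φ' (Subtype.ext (hmul a b))
  · rw [← h'one]; exact congrArg φ' (Subtype.ext hone)
  · calc plus' t * φ' (ι a) = φ' (ι (α t a)) * (plus' t * minus' t * plus' t) := by
          rw [hpφ, hconj, h'mul, hpm', mul_assoc]
      _ = φ' (ι (α t a)) * plus' t := by rw [mul_assoc, hmp, mul_one]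
  · calc φ' (ι a) * minus' s = minus' s * plus' s * minus' s * φ' (ι (α s a)) := by
          rw [hφm, hconj', h'mul, hpm', ← mul_assoc, ← mul_assoc]
      _ = minus' s * φ' (ι (α s a)) := by rw [hmp, one_mul]

/-- `φ'` is only multiplicative on `B`, which need not contain `s₋` or `s₊`; conjugating by
`s₊` moves `x = s₋ a s₊` into `φ(α_s 1) A φ(α_s 1) ⊆ B`, where `φ'(α_s 1) = s'₊ s'₋`. -/
theorem apply_eq_minus_mul_mul_plus (h : FSMRRelations α φ minus plus) (hφB : ∀ a, φ a ∈ B)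
    (h' : FSMRRelations (conjAct B hmem) φ' minus' plus') {x : B} {s : S} {a : A}
    (hx : (x : R) = minus s * φ a * plus s) :
    φ' x = minus' s * φ' ⟨φ a, hφB a⟩ * plus' s := by
  set ι : A → B := fun a => ⟨φ a, hφB a⟩
  have hconj : conjAct B hmem s x = ι (α s 1) * ι a * ι (α s 1) := by
    obtain ⟨-, -, -, -, -, -, -, -, -, -, hpm⟩ := h
    refine Subtype.ext ?_
    show plus s * x * minus s = φ (α s 1) * φ a * φ (α s 1)
    rw [hx, ← hpm]
    simp only [mul_assoc]
  have hpm' := apply_eq_plus_mul_minus hmem h hφB h' s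
  obtain ⟨-, h'mul, -, -, -, -, -, -, hφm, hmp, -⟩ := h'
  have hcancel (z : R') : minus' s * (plus' s * z) = z := by rw [← mul_assoc, hmp, one_mul]
  calc φ' x = φ' x * minus' s * plus' s := by rw [mul_assoc, hmp, mul_one]
    _ = minus' s * (plus' s * minus' s * φ' (ι a) * (plus' s * minus' s)) * plus' s := by
      rw [hφm, hconj, h'mul, h'mul, hpm']
    _ = minus' s * φ' (ι a) * plus' s := by simp only [mul_assoc, hcancel, hmp, mul_one]

end Subring

end FSMRRelations

namespace IsFSMR

variable {A : Type u} {S : Type v} {R : Type w} [Ring A] [Monoid S] [Ring R]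
  {α : S → A → A} {φ : A → R} {minus plus : S → R}

/-- `IsFSMR` quantifies over targets in `Type (max u v w)` only; the subring `B` of `R` needs
targets in `Type (max v w)`, reached through `ULift`. -/
theorem existsUnique_ringHom (h : IsFSMR α φ minus plus) {R' : Type (max v w)} [Ring R']
    {φ' : A → R'} {minus' plus' : S → R'} (h' : FSMRRelations α φ' minus' plus') :
    ∃! ψ : R →+* R', (∀ a, ψ (φ a) = φ' a) ∧ (∀ s, ψ (minus s) = minus' s) ∧
      ∀ s, ψ (plus s) = plus' s := by
  let e : R' ≃+* ULift.{u} R' := ULift.ringEquiv.symm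
  obtain ⟨ψ₀, ⟨hφ, hminus, hplus⟩, huniq⟩ := h.2 _ _ _ _ (h'.map e.toRingHom)
  refine ⟨e.symm.toRingHom.comp ψ₀, ⟨fun a => ?_, fun s => ?_, fun s => ?_⟩, ?_⟩
  · simp [hφ]
  · simp [hminus]
  · simp [hplus]
  rintro ψ ⟨hψφ, hψminus, hψplus⟩
  have hψ : e.toRingHom.comp ψ = ψ₀ :=
    huniq _ ⟨by simp [hψφ], by simp [hψminus], by simp [hψplus]⟩
  ext r
  simp [← hψ]

end IsFSMR

theorem stmt9_general {A : Type u} {S : Type v} {R : Type w} [Ring A] [Monoid S] [Ring R]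
    (α : S → A → A)
    (φ : A → R) (minus plus : S → R)
    (huniv : IsFSMR α φ minus plus)
    (B : Subring R)
    (hB : (B : Set R) = {x | ∃ (s : S) (a : A), x = minus s * φ a * plus s})
    (hmem : ∀ (s : S) (x : R), x ∈ B → plus s * x * minus s ∈ B) :
    IsFSMR (fun (s : S) (x : B) => (⟨plus s * (x : R) * minus s, hmem s x x.2⟩ : B))
      (fun x : B => (x : R)) minus plus := by
  have hrel := huniv.1
  have hφB (a : A) : φ a ∈ B := by
    obtain ⟨-, -, -, hp1, -, hm1, -⟩ := hrel
    rw [← SetLike.mem_coe, hB]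
    exact ⟨1, a, by rw [hm1, hp1, one_mul, mul_one]⟩
  refine ⟨hrel.subring_conjAct B hmem, fun R' _ φ' minus' plus' h' => ?_⟩
  obtain ⟨ψ, ⟨hψφ, hψminus, hψplus⟩, huniq⟩ :=
    huniv.existsUnique_ringHom (hrel.restrict hmem hφB h')
  refine ⟨ψ, ⟨fun x => ?_, hψminus, hψplus⟩, fun ψ' ⟨hψ'B, hψ'minus, hψ'plus⟩ =>
    huniq ψ' ⟨fun a => hψ'B ⟨φ a, hφB a⟩, hψ'minus, hψ'plus⟩⟩
  obtain ⟨s, a, hx⟩ : (x : R) ∈ {x | ∃ (s : S) (a : A), x = minus s * φ a * plus s} :=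
    hB ▸ x.2
  show ψ x = φ' x
  rw [hrel.apply_eq_minus_mul_mul_plus hmem hφB h' hx, hx, map_mul, map_mul, hψminus,
    hψplus, hψφ]

/-- With the extended action `ᾱ_s(x) = s₊ x s₋` of `S` on the subring
`B = S₋AS₊`, the fractional skew monoid rings coincide:
`Sᵒᵖ *_α A *_α S = Sᵒᵖ *_ᾱ B *_ᾱ S`, i.e. `R` together with the inclusion of `B` and
the same maps `s ↦ s₋, s₊` is universal for `(B, ᾱ)`. -/
theorem stmt9 {A : Type u} {S : Type v} {R : Type w} [Ring A] [Monoid S] [Ring R]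
    (α : S → A → A)
    (hadd : ∀ (t : S) (a b : A), α t (a + b) = α t a + α t b)
    (hmul : ∀ (t : S) (a b : A), α t (a * b) = α t a * α t b)
    (hone : ∀ a : A, α 1 a = a)
    (hcomp : ∀ (s t : S) (a : A), α (s * t) a = α s (α t a))
    (hinj : ∀ s : S, Function.Injective (α s))
    (hOre : ∀ s t : S, ∃ sh th : S, sh * t = th * s)
    (hRev : ∀ t u s : S, t * s = u * s → ∃ s' : S, s' * t = s' * u)
    (φ : A → R) (minus plus : S → R)
    (huniv : IsFSMR α φ minus plus)
    (B : Subring R)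
    (hB : (B : Set R) = {x | ∃ (s : S) (a : A), x = minus s * φ a * plus s})
    (hmem : ∀ (s : S) (x : R), x ∈ B → plus s * x * minus s ∈ B) :
    IsFSMR (fun (s : S) (x : B) => (⟨plus s * (x : R) * minus s, hmem s x x.2⟩ : B))
      (fun x : B => (x : R)) minus plus :=
  stmt9_general α φ minus plus huniv B hB hmem
end

section
/- The ideal $I = \bigcup_{s' \in S} \ker(\alpha_{s'})$ of $A$ satisfies $\alpha_s^{-1}(I) = I$ for all $s \in S$ and $\alpha_t(I) \subseteq I$ for all $t \in T$. Consequently, $\alpha$ induces a monoid action $\alpha': T \to \mathrm{Endr}(A/I)$ with $\alpha'_s$ injective for all $s \in S$. -/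
/-! Everything rests on the left Ore condition: if `α s a = 0` and `s' * t = t' * s` with
`s' ∈ S`, then `α s' (α t a) = α t' (α s a) = 0`, so each `α t` maps the union of the kernels
into itself, and these kernels form a directed family. Conversely `α s a ∈ ker α s'` gives
`a ∈ ker α (s' * s)`. -/

namespace Submonoid

variable {A T : Type*} [NonUnitalNonAssocRing A] [Monoid T] (S : Submonoid T)
  (α : T → A →ₙ+* A)

def kerUnion : Set A := {a | ∃ s : S, α s a = 0}

variable {S α} (hα : ∀ (s t : T) (a : A), α (s * t) a = α s (α t a))
include hα

theorem mem_kerUnion_of_apply_mem {s : S} {a : A} (ha : α s a ∈ S.kerUnion α) :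
    a ∈ S.kerUnion α := by
  obtain ⟨s', hs'⟩ := ha
  exact ⟨s' * s, by rw [coe_mul, hα, hs']⟩

variable (hOre : ∀ (s : S) (t : T), ∃ (s' : S) (t' : T), (s' : T) * t = t' * s)
include hOre

theorem apply_mem_kerUnion (t : T) {a : A} (ha : a ∈ S.kerUnion α) :
    α t a ∈ S.kerUnion α := by
  obtain ⟨s, hs⟩ := ha
  obtain ⟨s', t', h⟩ := hOre s t
  exact ⟨s', by rw [← hα, h, hα, hs, map_zero]⟩

theorem add_mem_kerUnion {a b : A} (ha : a ∈ S.kerUnion α) (hb : b ∈ S.kerUnion α) :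
    a + b ∈ S.kerUnion α := by
  obtain ⟨s₁, h₁⟩ := ha
  obtain ⟨s₂, h₂⟩ := hb
  obtain ⟨s', t', h⟩ := hOre s₂ s₁
  refine ⟨s' * s₁, ?_⟩
  have ha' : α (s' * s₁ : S) a = 0 := by rw [coe_mul, hα, h₁, map_zero]
  have hb' : α (s' * s₁ : S) b = 0 := by rw [coe_mul, h, hα, h₂, map_zero]
  rw [map_add, ha', hb', add_zero]

def kerUnionIdeal : TwoSidedIdeal A :=
  TwoSidedIdeal.mk' (S.kerUnion α) ⟨1, map_zero _⟩ (add_mem_kerUnion hα hOre)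
    (fun ⟨s, hs⟩ => ⟨s, by rw [map_neg, hs, neg_zero]⟩)
    (fun ⟨s, hs⟩ => ⟨s, by rw [map_mul, hs, mul_zero]⟩)
    (fun ⟨s, hs⟩ => ⟨s, by rw [map_mul, hs, zero_mul]⟩)

theorem mem_kerUnionIdeal (a : A) : a ∈ kerUnionIdeal hα hOre ↔ a ∈ S.kerUnion α :=
  TwoSidedIdeal.mem_mk' _ _ _ _ _ _ a

theorem preimage_kerUnion (s : S) : α s ⁻¹' S.kerUnion α = S.kerUnion α :=
  Set.Subset.antisymm (fun _ ha => mem_kerUnion_of_apply_mem hα ha)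
    (fun _ ha => apply_mem_kerUnion hα hOre s ha)

theorem image_kerUnion_subset (t : T) : α t '' S.kerUnion α ⊆ S.kerUnion α := by
  rintro _ ⟨a, ha, rfl⟩
  exact apply_mem_kerUnion hα hOre t ha

theorem apply_sub_apply_mem_kerUnion (t : T) {a b : A} (hab : a - b ∈ S.kerUnion α) :
    α t a - α t b ∈ S.kerUnion α := by
  rw [← map_sub]
  exact apply_mem_kerUnion hα hOre t hab

end Submonoid

theorem stmt11_general {A T : Type*} [Ring A] [Monoid T]
    (S : Submonoid T) (α : T → A → A)
    (hadd : ∀ (t : T) (a b : A), α t (a + b) = α t a + α t b)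
    (hmul : ∀ (t : T) (a b : A), α t (a * b) = α t a * α t b)
    (hcomp : ∀ (s t : T) (a : A), α (s * t) a = α s (α t a))
    (hOre : ∀ (s : S) (t : T), ∃ (s' : S) (t' : T), (s' : T) * t = t' * s) :
    letI I : Set A := {a | ∃ s' : S, α (s' : T) a = 0}
    (∃ J : TwoSidedIdeal A, ∀ a : A, a ∈ J ↔ a ∈ I) ∧
    (∀ s : S, α (s : T) ⁻¹' I = I) ∧
    (∀ t : T, α t '' I ⊆ I) ∧
    (∀ (t : T) (a b : A), a - b ∈ I → α t a - α t b ∈ I) ∧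
    (∀ (s : S) (a : A), α (s : T) a ∈ I → a ∈ I) := by
  let β : T → A →ₙ+* A := fun t =>
    { AddMonoidHom.mk' (α t) (hadd t) with map_mul' := hmul t }
  have hβ : ∀ (s t : T) (a : A), β (s * t) a = β s (β t a) := hcomp
  exact ⟨⟨Submonoid.kerUnionIdeal hβ hOre, Submonoid.mem_kerUnionIdeal hβ hOre⟩,
    Submonoid.preimage_kerUnion hβ hOre,
    Submonoid.image_kerUnion_subset hβ hOre,
    fun t _ _ => Submonoid.apply_sub_apply_mem_kerUnion hβ hOre t,
    fun _ _ => Submonoid.mem_kerUnion_of_apply_mem hβ⟩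

/-- The set `I = ⋃_{s' ∈ S} ker α_{s'}` is a two-sided ideal of `A`
satisfying `α_s⁻¹(I) = I` for `s ∈ S` and `α_t(I) ⊆ I` for `t ∈ T`; consequently `α`
descends to `A/I` (it is well defined modulo `I`) and the induced maps are injective
for `s ∈ S`. -/
theorem stmt11 {A T : Type*} [Ring A] [Monoid T]
    (S : Submonoid T) (α : T → A → A)
    (hadd : ∀ (t : T) (a b : A), α t (a + b) = α t a + α t b)
    (hmul : ∀ (t : T) (a b : A), α t (a * b) = α t a * α t b)
    (hone : ∀ a : A, α 1 a = a)
    (hcomp : ∀ (s t : T) (a : A), α (s * t) a = α s (α t a))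
    (hOre : ∀ (s : S) (t : T), ∃ (s' : S) (t' : T), (s' : T) * t = t' * s)
    (hRev : ∀ (t u : T) (s : S), t * s = u * s → ∃ s' : S, (s' : T) * t = (s' : T) * u)
    (hSat : ∀ (t : T) (s : S), t * (s : T) ∈ S → t ∈ S) :
    letI I : Set A := {a | ∃ s' : S, α (s' : T) a = 0}
    (∃ J : TwoSidedIdeal A, ∀ a : A, a ∈ J ↔ a ∈ I) ∧
    (∀ s : S, α (s : T) ⁻¹' I = I) ∧
    (∀ t : T, α t '' I ⊆ I) ∧
    (∀ (t : T) (a b : A), a - b ∈ I → α t a - α t b ∈ I) ∧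
    (∀ (s : S) (a : A), α (s : T) a ∈ I → a ∈ I) :=
  stmt11_general S α hadd hmul hcomp hOre
end

section
/- Let $G$ be a group, $A$ a unital ring, $\alpha: G \to \mathrm{Aut}(A)$ an action, $S \subseteq G$ a submonoid with $G = S^{-1} S$, and $e \in A$ a nonzero idempotent with $\alpha_s(e) \le e$ (i.e., $\alpha_s(e) = e \alpha_s(e) = \alpha_s(e) e$) for all $s \in S$. Then the action $\alpha$ restricts to an action $\alpha': S \to \mathrm{Endr}(eAe)$ by injective ring endomorphisms of the corner ring $eAe$, given by $\alpha'_s(x) = \alpha_s(x)$ for $x \in eAe$. -/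
theorem mapsTo_corner_of_map_le {M F : Type*} [Semigroup M] [FunLike F M M] [MulHomClass F M M]
    (f : F) {e : M} (hright : f e * e = f e) (hleft : e * f e = f e) :
    Set.MapsTo f {x | x = e * x * e} {x | x = e * x * e} := by
  intro x (hx : x = e * x * e)
  show f x = e * f x * e
  have hfx : f x = f e * f x * f e := by conv_lhs => rw [hx, map_mul, map_mul]
  calc f x = (e * f e) * f x * (f e * e) := by rw [hright, hleft, ← hfx]
    _ = e * (f e * f x * f e) * e := by simp only [mul_assoc]
    _ = e * f x * e := by rw [← hfx]

theorem stmt12_general {A G : Type*} [Ring A] [Group G]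
    (α : G →* RingAut A)
    (S : Submonoid G)
    (e : A)
    (hle : ∀ s : S, α (s : G) e * e = α (s : G) e ∧ e * α (s : G) e = α (s : G) e) :
    ∀ s : S,
      Set.MapsTo (α (s : G)) {x | x = e * x * e} {x | x = e * x * e} ∧
      Set.InjOn (α (s : G)) {x | x = e * x * e} ∧
      (∀ x y : A, α (s : G) (x * y) = α (s : G) x * α (s : G) y) ∧
      (∀ x y : A, α (s : G) (x + y) = α (s : G) x + α (s : G) y) := fun s =>
  ⟨mapsTo_corner_of_map_le (α s) (hle s).1 (hle s).2, (α s).injective.injOn,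
    map_mul _, map_add _⟩

/-- If a group `G` acts on `A` by ring automorphisms, `S ≤ G` is a
submonoid with `G = S⁻¹S`, and `e` is a nonzero idempotent with `α_s(e) ≤ e` for all
`s ∈ S`, then `α` restricts to an action of `S` on the corner `eAe` by injective ring
endomorphisms. -/
theorem stmt12 {A G : Type*} [Ring A] [Group G]
    (α : G →* RingAut A)
    (S : Submonoid G)
    (hG : ∀ g : G, ∃ s t : S, g = (s : G)⁻¹ * (t : G))
    (e : A) (he0 : e ≠ 0) (hid : IsIdempotentElem e)
    (hle : ∀ s : S, α (s : G) e * e = α (s : G) e ∧ e * α (s : G) e = α (s : G) e) :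
    ∀ s : S,
      Set.MapsTo (α (s : G)) {x | x = e * x * e} {x | x = e * x * e} ∧
      Set.InjOn (α (s : G)) {x | x = e * x * e} ∧
      (∀ x y : A, α (s : G) (x * y) = α (s : G) x * α (s : G) y) ∧
      (∀ x y : A, α (s : G) (x + y) = α (s : G) x + α (s : G) y) :=
  stmt12_general α S e hle
end

section
/- With $G$, $A$, $\alpha$, $S$, $e$ as above and $R = A *_\alpha G$ the skew group ring, the maps $S^{op} \to eRe$, $s \mapsto e s^{-1}$, and $S \to eRe$, $t \mapsto t e$, are monoid homomorphisms into the corner ring $eRe$ satisfying (together with the inclusion $\phi: eAe \to eRe$) the four defining relations of the fractional skew monoid ring with respect to the restricted action $\alpha'$; in particular $(es^{-1})(se) = e$ and $(se)(es^{-1}) = \alpha_s(e)$ for all $s \in S$. -/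
/-!
Everything is read off the covariance relation `j g * ψ a = ψ (α g a) * j g`. Because
`α s e ≤ e`, the idempotent `ψ e` can be inserted to the left of `j s * ψ e` and to the right
of `ψ e * j s⁻¹` for free; this gives both the corner property and the (anti)multiplicativity
of `s ↦ j s * ψ e` and `s ↦ ψ e * j s⁻¹`. The relations are conjugation by `j s`.
-/

theorem IsIdempotentElem.mul_eq_of_eq_mul_mul {M : Type*} [Semigroup M] {e a : M}
    (he : IsIdempotentElem e) (ha : a = e * a * e) : e * a = a := by
  rw [ha, ← mul_assoc, ← mul_assoc, he.eq]

theorem IsIdempotentElem.mul_eq_of_eq_mul_mul' {M : Type*} [Semigroup M] {e a : M}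
    (he : IsIdempotentElem e) (ha : a = e * a * e) : a * e = a := by
  rw [ha, mul_assoc _ e e, he.eq]

theorem IsIdempotentElem.mul_mul_mul_eq_self_of_mul_eq_one {M : Type*} [Monoid M] {e x y : M}
    (he : IsIdempotentElem e) (hxy : x * y = 1) : e * x * (y * e) = e := by
  rw [mul_assoc, ← mul_assoc x, hxy, one_mul, he.eq]

/-- `ψ` and `j` play the roles of the embeddings of `A` and `G` into `A *_α G`. -/
def IsCovariant {A G W : Type*} [Ring A] [Group G] [Ring W]
    (α : G →* RingAut A) (ψ : A →+* W) (j : G →* W) : Prop :=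
  ∀ (g : G) (a : A), j g * ψ a = ψ (α g a) * j g

namespace IsCovariant

variable {A G W : Type*} [Ring A] [Group G] [Ring W]
  {α : G →* RingAut A} {ψ : A →+* W} {j : G →* W} {e a : A} {g h : G}

theorem inv_mul_map_apply (hc : IsCovariant α ψ j) (g : G) (a : A) :
    j g⁻¹ * ψ (α g a) = ψ a * j g⁻¹ := by
  simpa [map_inv, RingAut.inv_apply] using hc g⁻¹ (α g a)

theorem mul_map_mul_inv (hc : IsCovariant α ψ j) (g : G) (a : A) :
    j g * ψ a * j g⁻¹ = ψ (α g a) := by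
  rw [hc, mul_assoc, ← map_mul, mul_inv_cancel, map_one, mul_one]

theorem map_mul_mul_map (hc : IsCovariant α ψ j) (he : e * α g e = α g e) :
    ψ e * (j g * ψ e) = j g * ψ e := by
  rw [hc, ← mul_assoc, ← map_mul, he]

theorem map_mul_inv_mul_map (hc : IsCovariant α ψ j) (he : α g e * e = α g e) :
    ψ e * j g⁻¹ * ψ e = ψ e * j g⁻¹ := by
  rw [← hc.inv_mul_map_apply, mul_assoc, ← map_mul, he, hc.inv_mul_map_apply]

theorem map_mul_mul_map_mul_map (hc : IsCovariant α ψ j) (hid : IsIdempotentElem e)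
    (he : e * α g e = α g e) : ψ e * (j g * ψ e) * ψ e = j g * ψ e := by
  rw [hc.map_mul_mul_map he, mul_assoc, ← map_mul, hid.eq]

theorem map_mul_map_mul_inv_mul_map (hc : IsCovariant α ψ j) (hid : IsIdempotentElem e)
    (he : α g e * e = α g e) : ψ e * (ψ e * j g⁻¹) * ψ e = ψ e * j g⁻¹ := by
  rw [← mul_assoc, ← map_mul, hid.eq, hc.map_mul_inv_mul_map he]

theorem mul_mul_map (hc : IsCovariant α ψ j) (g : G) (he : e * α h e = α h e) :
    j (g * h) * ψ e = j g * ψ e * (j h * ψ e) := by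
  rw [map_mul, mul_assoc, mul_assoc, hc.map_mul_mul_map he]

theorem map_mul_mul_inv (hc : IsCovariant α ψ j) (g : G) (he : α h e * e = α h e) :
    ψ e * j (g * h)⁻¹ = ψ e * j h⁻¹ * (ψ e * j g⁻¹) := by
  rw [mul_inv_rev, map_mul, ← mul_assoc (ψ e * j h⁻¹), hc.map_mul_inv_mul_map he, mul_assoc]

theorem mul_map_mul_map_of_mul_eq (hc : IsCovariant α ψ j) (g : G)
    (hea : e * a = a) (hae : a * e = a) :
    j g * ψ e * ψ a = ψ (α g a) * (j g * ψ e) := by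
  rw [mul_assoc, ← map_mul, hea, hc, hc, ← mul_assoc, ← map_mul, ← map_mul, hae]

theorem map_mul_map_mul_inv_of_mul_eq (hc : IsCovariant α ψ j) (g : G)
    (hea : e * a = a) (hae : a * e = a) :
    ψ a * (ψ e * j g⁻¹) = ψ e * j g⁻¹ * ψ (α g a) := by
  rw [← mul_assoc, ← map_mul, hae, mul_assoc, hc.inv_mul_map_apply, ← mul_assoc, ← map_mul, hea]

theorem mul_map_mul_map_mul_inv (hc : IsCovariant α ψ j) (hid : IsIdempotentElem e) (g : G) :
    j g * ψ e * (ψ e * j g⁻¹) = ψ (α g e) := by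
  rw [← mul_assoc, mul_assoc (j g), ← map_mul, hid.eq, hc.mul_map_mul_inv]

end IsCovariant

theorem stmt13_general {A G W : Type*} [Ring A] [Group G] [Ring W]
    (α : G →* RingAut A)
    (S : Submonoid G)
    (e : A) (hid : IsIdempotentElem e)
    (hle : ∀ s : S, α (s : G) e * e = α (s : G) e ∧ e * α (s : G) e = α (s : G) e)
    (ψ : A →+* W)
    (j : G →* W)
    (hcov : ∀ (g : G) (a : A), j g * ψ a = ψ (α g a) * j g) :
    letI E : W := ψ e
    letI fp : S → W := fun s => j (s : G) * E
    letI fm : S → W := fun s => E * j ((s : G)⁻¹)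
    -- `fp` and `fm` are (anti)multiplicative maps landing in the corner `eRe`
    (fp 1 = E) ∧ (∀ s t : S, fp (s * t) = fp s * fp t) ∧
    (fm 1 = E) ∧ (∀ s t : S, fm (s * t) = fm t * fm s) ∧
    (∀ s : S, fp s = E * fp s * E ∧ fm s = E * fm s * E) ∧
    -- the four defining relations of the fractional skew monoid ring over `eAe`
    (∀ (s : S) (a : A), a = e * a * e → fp s * ψ a = ψ (α (s : G) a) * fp s) ∧
    (∀ (s : S) (a : A), a = e * a * e → ψ a * fm s = fm s * ψ (α (s : G) a)) ∧
    (∀ s : S, fm s * fp s = E) ∧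
    (∀ s : S, fp s * fm s = ψ (α (s : G) e)) := by
  have hc : IsCovariant α ψ j := hcov
  dsimp only
  refine ⟨by simp, fun s t => hc.mul_mul_map _ (hle t).2, by simp,
    fun s t => hc.map_mul_mul_inv _ (hle t).1,
    fun s => ⟨(hc.map_mul_mul_map_mul_map hid (hle s).2).symm,
      (hc.map_mul_map_mul_inv_mul_map hid (hle s).1).symm⟩,
    fun s a ha => hc.mul_map_mul_map_of_mul_eq _ (hid.mul_eq_of_eq_mul_mul ha)
      (hid.mul_eq_of_eq_mul_mul' ha),
    fun s a ha => hc.map_mul_map_mul_inv_of_mul_eq _ (hid.mul_eq_of_eq_mul_mul ha)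
      (hid.mul_eq_of_eq_mul_mul' ha),
    fun s => (hid.map ψ).mul_mul_mul_eq_self_of_mul_eq_one
      (by rw [← map_mul, inv_mul_cancel, map_one]),
    fun s => hc.mul_map_mul_map_mul_inv hid _⟩

/-- In the skew group ring `R = A *_α G` (axiomatized by an injective
unital ring homomorphism `ψ : A → W`, a homomorphism `j : G → Wˣ`-style map with
`j g · ψ a = ψ(α_g a) · j g`), the maps `s ↦ e s⁻¹` and `s ↦ s e` are monoid
homomorphisms into the corner `eRe` satisfying the four defining relations of the
fractional skew monoid ring for the restricted action; in particular
`(e s⁻¹)(s e) = e` and `(s e)(e s⁻¹) = α_s(e)`. -/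
theorem stmt13 {A G W : Type*} [Ring A] [Group G] [Ring W]
    (α : G →* RingAut A)
    (S : Submonoid G)
    (hG : ∀ g : G, ∃ s t : S, g = (s : G)⁻¹ * (t : G))
    (e : A) (he0 : e ≠ 0) (hid : IsIdempotentElem e)
    (hle : ∀ s : S, α (s : G) e * e = α (s : G) e ∧ e * α (s : G) e = α (s : G) e)
    (ψ : A →+* W) (hψ : Function.Injective ψ)
    (j : G →* W)
    (hcov : ∀ (g : G) (a : A), j g * ψ a = ψ (α g a) * j g) :
    letI E : W := ψ e
    letI fp : S → W := fun s => j (s : G) * E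
    letI fm : S → W := fun s => E * j ((s : G)⁻¹)
    -- `fp` and `fm` are (anti)multiplicative maps landing in the corner `eRe`
    (fp 1 = E) ∧ (∀ s t : S, fp (s * t) = fp s * fp t) ∧
    (fm 1 = E) ∧ (∀ s t : S, fm (s * t) = fm t * fm s) ∧
    (∀ s : S, fp s = E * fp s * E ∧ fm s = E * fm s * E) ∧
    -- the four defining relations of the fractional skew monoid ring over `eAe`
    (∀ (s : S) (a : A), a = e * a * e → fp s * ψ a = ψ (α (s : G) a) * fp s) ∧
    (∀ (s : S) (a : A), a = e * a * e → ψ a * fm s = fm s * ψ (α (s : G) a)) ∧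
    (∀ s : S, fm s * fp s = E) ∧
    (∀ s : S, fp s * fm s = ψ (α (s : G) e)) :=
  stmt13_general α S e hid hle ψ j hcov
end

section
/- Let $S$ be a cancellative left Ore monoid and $\alpha: S \to \mathrm{Endr}(A)$ an action on a unital ring $A$ by injective endomorphisms. Define a relation on $S \times A$ by $(s_1, a_1) \sim (s_2, a_2)$ iff there exist $t_1, t_2 \in S$ with $t_1 s_1 = t_2 s_2$ and $\alpha_{t_1}(a_1) = \alpha_{t_2}(a_2)$. Then $\sim$ is an equivalence relation, and the operations $[s_1, a_1] \cdot [s_2, a_2] = [t_1 s_1, \alpha_{t_1}(a_1) \alpha_{t_2}(a_2)]$ and $[s_1, a_1] + [s_2, a_2] = [t_1 s_1, \alpha_{t_1}(a_1) + \alpha_{t_2}(a_2)]$ (for any $t_1, t_2 \in S$ with $t_1 s_1 = t_2 s_2$) are well defined and make $S^{-1} A := (S \times A)/{\sim}$ a (possibly non-unital) ring. -/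
universe u v

namespace Stmt14

variable {A : Type u} {S : Type v} [Ring A] [Monoid S]

def r (α : S → A → A) : S × A → S × A → Prop := fun p q =>
  ∃ t₁ t₂ : S, t₁ * p.1 = t₂ * q.1 ∧ α t₁ p.2 = α t₂ q.2

structure Pack (α : S → A → A) : Prop where
  hcancel : ∀ a b c : S, (a * c = b * c → a = b) ∧ (c * a = c * b → a = b)
  hOre : ∀ s t : S, ∃ s' t' : S, s' * t = t' * s
  hadd : ∀ (t : S) (a b : A), α t (a + b) = α t a + α t b
  hmul : ∀ (t : S) (a b : A), α t (a * b) = α t a * α t b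
  hone : ∀ a : A, α 1 a = a
  hcomp : ∀ (s t : S) (a : A), α (s * t) a = α s (α t a)

variable {α : S → A → A}

theorem Pack.map_zero (P : Pack α) (t : S) : α t 0 = 0 := by
  have h := P.hadd t 0 0
  rw [add_zero] at h
  exact (left_eq_add.mp h)

theorem Pack.map_neg (P : Pack α) (t : S) (a : A) : α t (-a) = -α t a := by
  have h : α t (-a) + α t a = 0 := by
    rw [← P.hadd, neg_add_cancel, P.map_zero]
  exact eq_neg_of_add_eq_zero_left h

theorem Pack.equiv (P : Pack α) : Equivalence (r α) where
  refl p := ⟨1, 1, rfl, rfl⟩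
  symm := fun ⟨t₁, t₂, h1, h2⟩ => ⟨t₂, t₁, h1.symm, h2.symm⟩
  trans := by
    rintro p q u ⟨t₁, t₂, h1, h2⟩ ⟨w₁, w₂, g1, g2⟩
    obtain ⟨v₁, v₂, hv⟩ := P.hOre t₂ w₁
    refine ⟨v₂ * t₁, v₁ * w₂, ?_, ?_⟩
    · rw [mul_assoc, h1, ← mul_assoc, ← hv, mul_assoc, g1, ← mul_assoc]
    · rw [P.hcomp, h2, ← P.hcomp, ← hv, P.hcomp, g2, ← P.hcomp]

theorem Pack.common3 (P : Pack α) (s₁ s₂ s₃ : S) :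
    ∃ v₁ v₂ v₃ : S, v₁ * s₁ = v₂ * s₂ ∧ v₁ * s₁ = v₃ * s₃ := by
  obtain ⟨u₁, u₂, h⟩ := P.hOre s₂ s₁
  obtain ⟨w, u₃, h'⟩ := P.hOre s₃ (u₁ * s₁)
  exact ⟨w * u₁, w * u₂, u₃, by rw [mul_assoc, mul_assoc, h],
    by rw [mul_assoc]; exact h'⟩

theorem Pack.indep (P : Pack α) (f : A → A → A)
    (hf : ∀ t x y, α t (f x y) = f (α t x) (α t y))
    {s₁ s₂ t₁ t₂ t₁' t₂' : S} (a₁ a₂ : A)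
    (h : t₁ * s₁ = t₂ * s₂) (h' : t₁' * s₁ = t₂' * s₂) :
    r α (t₁ * s₁, f (α t₁ a₁) (α t₂ a₂)) (t₁' * s₁, f (α t₁' a₁) (α t₂' a₂)) := by
  obtain ⟨x, y, hxy⟩ := P.hOre (t₁' * s₁) (t₁ * s₁)
  refine ⟨x, y, hxy, ?_⟩
  have e1 : x * t₁ = y * t₁' := by
    refine (P.hcancel _ _ s₁).1 ?_
    rw [mul_assoc, mul_assoc]; exact hxy
  have e2 : x * t₂ = y * t₂' := by
    refine (P.hcancel _ _ s₂).1 ?_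
    rw [mul_assoc, mul_assoc, ← h, ← h']; exact hxy
  calc α x (f (α t₁ a₁) (α t₂ a₂))
      = f (α (x * t₁) a₁) (α (x * t₂) a₂) := by rw [hf, P.hcomp, P.hcomp]
    _ = f (α (y * t₁') a₁) (α (y * t₂') a₂) := by rw [e1, e2]
    _ = α y (f (α t₁' a₁) (α t₂' a₂)) := by rw [hf, P.hcomp, P.hcomp]

def sd (P : Pack α) : Setoid (S × A) := ⟨r α, P.equiv⟩

def Q (P : Pack α) : Type max u v := Quotient (sd P)

abbrev mk (P : Pack α) : S × A → Q P := Quotient.mk (sd P)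

noncomputable def opFun (P : Pack α) (f : A → A → A) (p q : S × A) : S × A :=
  ((P.hOre q.1 p.1).choose * p.1,
    f (α (P.hOre q.1 p.1).choose p.2) (α (P.hOre q.1 p.1).choose_spec.choose q.2))

theorem mk_opFun (P : Pack α) (f : A → A → A)
    (hf : ∀ t x y, α t (f x y) = f (α t x) (α t y))
    (p q : S × A) {t₁ t₂ : S} (h : t₁ * p.1 = t₂ * q.1) :
    mk P (opFun P f p q) = mk P (t₁ * p.1, f (α t₁ p.2) (α t₂ q.2)) :=
  Quotient.sound (P.indep f hf p.2 q.2 (P.hOre q.1 p.1).choose_spec.choose_spec h)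

noncomputable def op (P : Pack α) (f : A → A → A)
    (hf : ∀ t x y, α t (f x y) = f (α t x) (α t y)) : Q P → Q P → Q P :=
  Quotient.lift₂ (fun p q => mk P (opFun P f p q)) (by
    rintro ⟨s₁, a₁⟩ ⟨s₂, a₂⟩ ⟨s₁', a₁'⟩ ⟨s₂', a₂'⟩ ⟨u₁, u₂, hu1, hu2⟩ ⟨v₁, v₂, hv1, hv2⟩
    obtain ⟨x, y, hxy⟩ := P.hOre (v₁ * s₂) (u₁ * s₁)
    have h : (x * u₁) * s₁ = (y * v₁) * s₂ := by
      rw [mul_assoc, mul_assoc]; exact hxy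
    have h' : (x * u₂) * s₁' = (y * v₂) * s₂' := by
      rw [mul_assoc, mul_assoc, ← hu1, ← hv1]; exact hxy
    show mk P (opFun P f (s₁, a₁) (s₂, a₂)) = mk P (opFun P f (s₁', a₁') (s₂', a₂'))
    rw [mk_opFun P f hf (s₁, a₁) (s₂, a₂) h, mk_opFun P f hf (s₁', a₁') (s₂', a₂') h']
    have e1 : (x * u₁) * s₁ = (x * u₂) * s₁' := by
      rw [mul_assoc, mul_assoc, hu1]
    have e2 : f (α (x * u₁) a₁) (α (y * v₁) a₂)
        = f (α (x * u₂) a₁') (α (y * v₂) a₂') := by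
      rw [P.hcomp, P.hcomp, P.hcomp, P.hcomp, hu2, hv2]
    simp only [e1, e2])

theorem op_mk (P : Pack α) (f : A → A → A)
    (hf : ∀ t x y, α t (f x y) = f (α t x) (α t y))
    (s₁ s₂ t₁ t₂ : S) (a₁ a₂ : A) (h : t₁ * s₁ = t₂ * s₂) :
    op P f hf (mk P (s₁, a₁)) (mk P (s₂, a₂)) = mk P (t₁ * s₁, f (α t₁ a₁) (α t₂ a₂)) :=
  mk_opFun P f hf (s₁, a₁) (s₂, a₂) h

noncomputable def addQ (P : Pack α) : Q P → Q P → Q P :=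
  op P (· + ·) (fun t x y => P.hadd t x y)

noncomputable def mulQ (P : Pack α) : Q P → Q P → Q P :=
  op P (· * ·) (fun t x y => P.hmul t x y)

theorem addQ_mk (P : Pack α) (s₁ s₂ t₁ t₂ : S) (a₁ a₂ : A) (h : t₁ * s₁ = t₂ * s₂) :
    addQ P (mk P (s₁, a₁)) (mk P (s₂, a₂)) = mk P (t₁ * s₁, α t₁ a₁ + α t₂ a₂) :=
  op_mk P _ _ s₁ s₂ t₁ t₂ a₁ a₂ h

theorem mulQ_mk (P : Pack α) (s₁ s₂ t₁ t₂ : S) (a₁ a₂ : A) (h : t₁ * s₁ = t₂ * s₂) :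
    mulQ P (mk P (s₁, a₁)) (mk P (s₂, a₂)) = mk P (t₁ * s₁, α t₁ a₁ * α t₂ a₂) :=
  op_mk P _ _ s₁ s₂ t₁ t₂ a₁ a₂ h

def negQ (P : Pack α) : Q P → Q P :=
  Quotient.map (fun p => (p.1, -p.2)) (by
    rintro p q ⟨t₁, t₂, h1, h2⟩
    exact ⟨t₁, t₂, h1, by rw [P.map_neg, P.map_neg, h2]⟩)

theorem negQ_mk (P : Pack α) (p : S × A) : negQ P (mk P p) = mk P (p.1, -p.2) := rfl

theorem mk_zero (P : Pack α) (s : S) : mk P (s, 0) = mk P (1, 0) :=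
  Quotient.sound ⟨1, s, by rw [one_mul, mul_one], by rw [P.map_zero, P.map_zero]⟩

theorem q_add_assoc (P : Pack α) (x y z : Q P) :
    addQ P (addQ P x y) z = addQ P x (addQ P y z) := by
  refine Quotient.inductionOn₃ x y z ?_
  rintro ⟨s₁, a₁⟩ ⟨s₂, a₂⟩ ⟨s₃, a₃⟩
  obtain ⟨v₁, v₂, v₃, h12, h13⟩ := P.common3 s₁ s₂ s₃
  have h23 : v₂ * s₂ = v₃ * s₃ := by rw [← h12]; exact h13
  show addQ P (addQ P (mk P (s₁, a₁)) (mk P (s₂, a₂))) (mk P (s₃, a₃)) = _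
  rw [addQ_mk P s₁ s₂ v₁ v₂ a₁ a₂ h12,
    addQ_mk P _ s₃ 1 v₃ _ a₃ (by rw [one_mul]; exact h13),
    addQ_mk P s₂ s₃ v₂ v₃ a₂ a₃ h23,
    addQ_mk P s₁ _ v₁ 1 a₁ _ (by rw [one_mul]; exact h12),
    one_mul, P.hone, P.hone, add_assoc]

theorem q_zero_add (P : Pack α) (x : Q P) : addQ P (mk P (1, 0)) x = x := by
  refine Quotient.inductionOn x ?_
  rintro ⟨s, a⟩
  show addQ P (mk P (1, 0)) (mk P (s, a)) = _
  rw [addQ_mk P 1 s s 1 0 a (by rw [mul_one, one_mul]),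
    mul_one, P.map_zero, P.hone, zero_add]

theorem q_add_zero (P : Pack α) (x : Q P) : addQ P x (mk P (1, 0)) = x := by
  refine Quotient.inductionOn x ?_
  rintro ⟨s, a⟩
  show addQ P (mk P (s, a)) (mk P (1, 0)) = _
  rw [addQ_mk P s 1 1 s a 0 (by rw [one_mul, mul_one]),
    one_mul, P.map_zero, P.hone, add_zero]

theorem q_add_comm (P : Pack α) (x y : Q P) : addQ P x y = addQ P y x := by
  refine Quotient.inductionOn₂ x y ?_
  rintro ⟨s₁, a₁⟩ ⟨s₂, a₂⟩
  obtain ⟨t₁, t₂, h⟩ := P.hOre s₂ s₁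
  show addQ P (mk P (s₁, a₁)) (mk P (s₂, a₂)) = _
  rw [addQ_mk P s₁ s₂ t₁ t₂ a₁ a₂ h, addQ_mk P s₂ s₁ t₂ t₁ a₂ a₁ h.symm,
    h, add_comm (α t₁ a₁)]

theorem q_neg_add_cancel (P : Pack α) (x : Q P) :
    addQ P (negQ P x) x = mk P (1, 0) := by
  refine Quotient.inductionOn x ?_
  rintro ⟨s, a⟩
  show addQ P (negQ P (mk P (s, a))) (mk P (s, a)) = _
  rw [negQ_mk, addQ_mk P s s 1 1 (-a) a rfl, P.hone, P.hone, neg_add_cancel,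
    mk_zero]

theorem q_mul_assoc (P : Pack α) (x y z : Q P) :
    mulQ P (mulQ P x y) z = mulQ P x (mulQ P y z) := by
  refine Quotient.inductionOn₃ x y z ?_
  rintro ⟨s₁, a₁⟩ ⟨s₂, a₂⟩ ⟨s₃, a₃⟩
  obtain ⟨v₁, v₂, v₃, h12, h13⟩ := P.common3 s₁ s₂ s₃
  have h23 : v₂ * s₂ = v₃ * s₃ := by rw [← h12]; exact h13
  show mulQ P (mulQ P (mk P (s₁, a₁)) (mk P (s₂, a₂))) (mk P (s₃, a₃)) = _
  rw [mulQ_mk P s₁ s₂ v₁ v₂ a₁ a₂ h12,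
    mulQ_mk P _ s₃ 1 v₃ _ a₃ (by rw [one_mul]; exact h13),
    mulQ_mk P s₂ s₃ v₂ v₃ a₂ a₃ h23,
    mulQ_mk P s₁ _ v₁ 1 a₁ _ (by rw [one_mul]; exact h12),
    one_mul, P.hone, P.hone, mul_assoc]

theorem q_left_distrib (P : Pack α) (x y z : Q P) :
    mulQ P x (addQ P y z) = addQ P (mulQ P x y) (mulQ P x z) := by
  refine Quotient.inductionOn₃ x y z ?_
  rintro ⟨s₁, a₁⟩ ⟨s₂, a₂⟩ ⟨s₃, a₃⟩
  obtain ⟨v₁, v₂, v₃, h12, h13⟩ := P.common3 s₁ s₂ s₃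
  have h23 : v₂ * s₂ = v₃ * s₃ := by rw [← h12]; exact h13
  show mulQ P (mk P (s₁, a₁)) (addQ P (mk P (s₂, a₂)) (mk P (s₃, a₃))) = _
  rw [addQ_mk P s₂ s₃ v₂ v₃ a₂ a₃ h23,
    mulQ_mk P s₁ _ v₁ 1 a₁ _ (by rw [one_mul]; exact h12),
    mulQ_mk P s₁ s₂ v₁ v₂ a₁ a₂ h12,
    mulQ_mk P s₁ s₃ v₁ v₃ a₁ a₃ h13,
    addQ_mk P _ _ 1 1 _ _ rfl,
    one_mul, P.hone, P.hone, P.hone, mul_add]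

theorem q_right_distrib (P : Pack α) (x y z : Q P) :
    mulQ P (addQ P x y) z = addQ P (mulQ P x z) (mulQ P y z) := by
  refine Quotient.inductionOn₃ x y z ?_
  rintro ⟨s₁, a₁⟩ ⟨s₂, a₂⟩ ⟨s₃, a₃⟩
  obtain ⟨v₁, v₂, v₃, h12, h13⟩ := P.common3 s₁ s₂ s₃
  have h23 : v₂ * s₂ = v₃ * s₃ := by rw [← h12]; exact h13
  show mulQ P (addQ P (mk P (s₁, a₁)) (mk P (s₂, a₂))) (mk P (s₃, a₃)) = _
  rw [addQ_mk P s₁ s₂ v₁ v₂ a₁ a₂ h12,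
    mulQ_mk P _ s₃ 1 v₃ _ a₃ (by rw [one_mul]; exact h13),
    mulQ_mk P s₁ s₃ v₁ v₃ a₁ a₃ h13,
    mulQ_mk P s₂ s₃ v₂ v₃ a₂ a₃ h23,
    addQ_mk P _ _ 1 1 _ _ (by rw [h12]),
    one_mul, P.hone, P.hone, P.hone, add_mul]

theorem q_zero_mul (P : Pack α) (x : Q P) :
    mulQ P (mk P (1, 0)) x = mk P (1, 0) := by
  refine Quotient.inductionOn x ?_
  rintro ⟨s, a⟩
  show mulQ P (mk P (1, 0)) (mk P (s, a)) = _
  rw [mulQ_mk P 1 s s 1 0 a (by rw [mul_one, one_mul]),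
    P.map_zero, zero_mul, mk_zero]

theorem q_mul_zero (P : Pack α) (x : Q P) :
    mulQ P x (mk P (1, 0)) = mk P (1, 0) := by
  refine Quotient.inductionOn x ?_
  rintro ⟨s, a⟩
  show mulQ P (mk P (s, a)) (mk P (1, 0)) = _
  rw [mulQ_mk P s 1 1 s a 0 (by rw [one_mul, mul_one]),
    P.map_zero, mul_zero, mk_zero]

noncomputable def ringQ (P : Pack α) : NonUnitalRing (Q P) :=
  letI : Add (Q P) := ⟨addQ P⟩
  letI : Mul (Q P) := ⟨mulQ P⟩
  letI : Zero (Q P) := ⟨mk P (1, 0)⟩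
  letI : Neg (Q P) := ⟨negQ P⟩
  { add := addQ P
    mul := mulQ P
    zero := mk P (1, 0)
    neg := negQ P
    nsmul := nsmulRec
    zsmul := zsmulRec
    add_assoc := q_add_assoc P
    zero_add := q_zero_add P
    add_zero := q_add_zero P
    add_comm := q_add_comm P
    neg_add_cancel := q_neg_add_cancel P
    mul_assoc := q_mul_assoc P
    left_distrib := q_left_distrib P
    right_distrib := q_right_distrib P
    zero_mul := q_zero_mul P
    mul_zero := q_mul_zero P }

end Stmt14

/-- For a cancellative left Ore monoid `S` acting on a unital ring `A` by
injective endomorphisms, the relation `(s₁,a₁) ∼ (s₂,a₂)` iff `∃ t₁ t₂, t₁s₁ = t₂s₂`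
and `α_{t₁}(a₁) = α_{t₂}(a₂)` is an equivalence relation, and the indicated operations
are well defined and make `S⁻¹A = (S × A)/∼` a (possibly non-unital) ring. -/
theorem stmt14 {A : Type u} {S : Type v} [Ring A] [Monoid S]
    (hcancel : ∀ a b c : S, (a * c = b * c → a = b) ∧ (c * a = c * b → a = b))
    (hOre : ∀ s t : S, ∃ s' t' : S, s' * t = t' * s)
    (α : S → A → A)
    (hadd : ∀ (t : S) (a b : A), α t (a + b) = α t a + α t b)
    (hmul : ∀ (t : S) (a b : A), α t (a * b) = α t a * α t b)
    (hone : ∀ a : A, α 1 a = a)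
    (hcomp : ∀ (s t : S) (a : A), α (s * t) a = α s (α t a))
    (hinj : ∀ s : S, Function.Injective (α s)) :
    letI r : S × A → S × A → Prop := fun p q =>
      ∃ t₁ t₂ : S, t₁ * p.1 = t₂ * q.1 ∧ α t₁ p.2 = α t₂ q.2
    Equivalence r ∧
    ∃ (Q : Type (max u v)) (_ : NonUnitalRing Q) (mk : S × A → Q),
      Function.Surjective mk ∧
      (∀ p q : S × A, mk p = mk q ↔ r p q) ∧
      (∀ (s₁ s₂ t₁ t₂ : S) (a₁ a₂ : A), t₁ * s₁ = t₂ * s₂ →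
        mk (s₁, a₁) * mk (s₂, a₂) = mk (t₁ * s₁, α t₁ a₁ * α t₂ a₂)) ∧
      (∀ (s₁ s₂ t₁ t₂ : S) (a₁ a₂ : A), t₁ * s₁ = t₂ * s₂ →
        mk (s₁, a₁) + mk (s₂, a₂) = mk (t₁ * s₁, α t₁ a₁ + α t₂ a₂)) := by
  have P : Stmt14.Pack α := ⟨hcancel, hOre, hadd, hmul, hone, hcomp⟩
  refine ⟨P.equiv, Stmt14.Q P, Stmt14.ringQ P, Stmt14.mk P, ?_, ?_, ?_, ?_⟩
  · exact fun q => Quotient.inductionOn q fun p => ⟨p, rfl⟩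
  · exact fun p q => ⟨Quotient.exact, fun h => Quotient.sound (s := Stmt14.sd P) h⟩
  · intro s₁ s₂ t₁ t₂ a₁ a₂ h
    exact Stmt14.mulQ_mk P s₁ s₂ t₁ t₂ a₁ a₂ h
  · intro s₁ s₂ t₁ t₂ a₁ a₂ h
    exact Stmt14.addQ_mk P s₁ s₂ t₁ t₂ a₁ a₂ h
end

section
/- The ring $S^{-1} A$ is isomorphic to the direct limit $A_S := \varinjlim (A_s, f_{s, ts})$, where $A_s = A$ for every $s \in S$ and $f_{s, ts}: A_s \to A_{ts}$ is $a \mapsto \alpha_t(a)$. The isomorphism $\Phi: A_S \to S^{-1} A$ sends the class of $a \in A_s$ to $[s, a]$. -/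
/-!
Both rings are quotients of `S × A` by the same relation: `(s, a)` and `(s', a')` are identified
iff `α_t a = α_{t'} a'` for some `t s = t' s'`. Hence `g` and `mk` factor through each other and
give mutually inverse bijections `[s, a]_{A_S} ↔ [s, a]_{S⁻¹A}`. Both ring operations are computed
on a common denominator supplied by the Ore condition, so the bijection preserves them.
-/

open Function

theorem Function.Surjective.exists_equiv_of_eq_iff {X L Q : Type*} {f : X → L} {h : X → Q}
    (hf : Surjective f) (hh : Surjective h) (hfh : ∀ x y, f x = f y ↔ h x = h y) :
    ∃ e : L ≃ Q, ∀ x, e (f x) = h x := by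
  have he : ∀ x, h (surjInv hf (f x)) = h x := fun x => (hfh _ _).1 (surjInv_eq hf (f x))
  refine ⟨Equiv.ofBijective (fun l => h (surjInv hf l)) ⟨fun l l' hl => ?_, fun q => ?_⟩, he⟩
  · rw [← surjInv_eq hf l, ← surjInv_eq hf l']
    exact (hfh _ _).2 hl
  · obtain ⟨x, rfl⟩ := hh q
    exact ⟨f x, he x⟩

theorem Function.Surjective.map_op_of_comp_eq {X L Q : Type*} {f : X → L} {h : X → Q}
    {e : L → Q} (hf : Surjective f) (he : ∀ x, e (f x) = h x)
    {opL : L → L → L} {opQ : Q → Q → Q}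
    (hop : ∀ x y, ∃ z, opL (f x) (f y) = f z ∧ opQ (h x) (h y) = h z) (l l' : L) :
    e (opL l l') = opQ (e l) (e l') := by
  obtain ⟨x, rfl⟩ := hf l
  obtain ⟨y, rfl⟩ := hf l'
  obtain ⟨z, hL, hQ⟩ := hop x y
  rw [hL, he, he, he, hQ]

theorem op_eq_at_common_left_multiple {A S L : Type*} [Mul S] (α : S → A → A)
    (g : S → A → L) (gcompat : ∀ (s t : S) (a : A), g (t * s) (α t a) = g s a)
    {opA : A → A → A} {opL : L → L → L} (gop : ∀ s a b, g s (opA a b) = opL (g s a) (g s b))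
    {s s' t t' : S} (h : t * s = t' * s') (a a' : A) :
    opL (g s a) (g s' a') = g (t * s) (opA (α t a) (α t' a')) := by
  rw [gop, gcompat, h, gcompat]

theorem stmt15_general {A S Q L : Type*} [Ring A] [Monoid S] [NonUnitalRing Q] [NonUnitalRing L]
    (hOre : ∀ s t : S, ∃ s' t' : S, s' * t = t' * s)
    (α : S → A → A)
    -- `Q = S⁻¹A`
    (mk : S × A → Q) (hsurj : Function.Surjective mk)
    (heq : ∀ p q : S × A, mk p = mk q ↔
      ∃ t₁ t₂ : S, t₁ * p.1 = t₂ * q.1 ∧ α t₁ p.2 = α t₂ q.2)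
    (hmulQ : ∀ (s₁ s₂ t₁ t₂ : S) (a₁ a₂ : A), t₁ * s₁ = t₂ * s₂ →
      mk (s₁, a₁) * mk (s₂, a₂) = mk (t₁ * s₁, α t₁ a₁ * α t₂ a₂))
    (haddQ : ∀ (s₁ s₂ t₁ t₂ : S) (a₁ a₂ : A), t₁ * s₁ = t₂ * s₂ →
      mk (s₁, a₁) + mk (s₂, a₂) = mk (t₁ * s₁, α t₁ a₁ + α t₂ a₂))
    -- `L = A_S`, the direct limit of copies of `A` along the maps `α_t`
    (g : S → A → L)
    (gadd : ∀ (s : S) (a b : A), g s (a + b) = g s a + g s b)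
    (gmul : ∀ (s : S) (a b : A), g s (a * b) = g s a * g s b)
    (gcompat : ∀ (s t : S) (a : A), g (t * s) (α t a) = g s a)
    (gsurj : ∀ x : L, ∃ (s : S) (a : A), x = g s a)
    (geq : ∀ (s s' : S) (a a' : A), g s a = g s' a' ↔
      ∃ t t' : S, t * s = t' * s' ∧ α t a = α t' a') :
    ∃ Φ : L ≃+* Q, ∀ (s : S) (a : A), Φ (g s a) = mk (s, a) := by
  have hg : Surjective (fun p : S × A => g p.1 p.2) := fun x => by
    obtain ⟨s, a, rfl⟩ := gsurj x
    exact ⟨(s, a), rfl⟩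
  obtain ⟨Φ, hΦ⟩ := hg.exists_equiv_of_eq_iff hsurj fun p q => (geq _ _ _ _).trans (heq p q).symm
  have hop {opA : A → A → A} {opL : L → L → L} {opQ : Q → Q → Q}
      (gop : ∀ s a b, g s (opA a b) = opL (g s a) (g s b))
      (hopQ : ∀ (s₁ s₂ t₁ t₂ : S) (a₁ a₂ : A), t₁ * s₁ = t₂ * s₂ →
        opQ (mk (s₁, a₁)) (mk (s₂, a₂)) = mk (t₁ * s₁, opA (α t₁ a₁) (α t₂ a₂)))
      (p q : S × A) :
      ∃ z : S × A, opL (g p.1 p.2) (g q.1 q.2) = g z.1 z.2 ∧ opQ (mk p) (mk q) = mk z := by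
    obtain ⟨t', t, ht⟩ := hOre p.1 q.1
    exact ⟨_, op_eq_at_common_left_multiple α g gcompat gop ht.symm _ _, hopQ _ _ _ _ _ _ ht.symm⟩
  exact ⟨{ Φ with
      map_add' := hg.map_op_of_comp_eq hΦ (hop gadd haddQ)
      map_mul' := hg.map_op_of_comp_eq hΦ (hop gmul hmulQ) }, fun s a => hΦ (s, a)⟩

/-- The ring `S⁻¹A` is isomorphic to the direct limit
`A_S = ⭢lim (A_s, f_{s,ts})` with `A_s = A` and `f_{s,ts} = α_t`, via
`Φ : [a ∈ A_s] ↦ [s,a]`.  Both rings are axiomatized by their standard presentations: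
`L` is the direct limit (compatible, jointly surjective maps `g_s : A → L` with the
"eventually equal" equality criterion), and `Q = S⁻¹A` is the quotient of `S × A` by
the Ore relation. -/
theorem stmt15 {A S Q L : Type*} [Ring A] [Monoid S] [NonUnitalRing Q] [NonUnitalRing L]
    (hcancel : ∀ a b c : S, (a * c = b * c → a = b) ∧ (c * a = c * b → a = b))
    (hOre : ∀ s t : S, ∃ s' t' : S, s' * t = t' * s)
    (α : S → A → A)
    (hadd : ∀ (t : S) (a b : A), α t (a + b) = α t a + α t b)
    (hmul : ∀ (t : S) (a b : A), α t (a * b) = α t a * α t b)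
    (hone : ∀ a : A, α 1 a = a)
    (hcomp : ∀ (s t : S) (a : A), α (s * t) a = α s (α t a))
    (hinj : ∀ s : S, Function.Injective (α s))
    -- `Q = S⁻¹A`
    (mk : S × A → Q) (hsurj : Function.Surjective mk)
    (heq : ∀ p q : S × A, mk p = mk q ↔
      ∃ t₁ t₂ : S, t₁ * p.1 = t₂ * q.1 ∧ α t₁ p.2 = α t₂ q.2)
    (hmulQ : ∀ (s₁ s₂ t₁ t₂ : S) (a₁ a₂ : A), t₁ * s₁ = t₂ * s₂ →
      mk (s₁, a₁) * mk (s₂, a₂) = mk (t₁ * s₁, α t₁ a₁ * α t₂ a₂))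
    (haddQ : ∀ (s₁ s₂ t₁ t₂ : S) (a₁ a₂ : A), t₁ * s₁ = t₂ * s₂ →
      mk (s₁, a₁) + mk (s₂, a₂) = mk (t₁ * s₁, α t₁ a₁ + α t₂ a₂))
    -- `L = A_S`, the direct limit of copies of `A` along the maps `α_t`
    (g : S → A → L)
    (gadd : ∀ (s : S) (a b : A), g s (a + b) = g s a + g s b)
    (gmul : ∀ (s : S) (a b : A), g s (a * b) = g s a * g s b)
    (gcompat : ∀ (s t : S) (a : A), g (t * s) (α t a) = g s a)
    (gsurj : ∀ x : L, ∃ (s : S) (a : A), x = g s a)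
    (geq : ∀ (s s' : S) (a a' : A), g s a = g s' a' ↔
      ∃ t t' : S, t * s = t' * s' ∧ α t a = α t' a') :
    ∃ Φ : L ≃+* Q, ∀ (s : S) (a : A), Φ (g s a) = mk (s, a) :=
  stmt15_general hOre α mk hsurj heq hmulQ haddQ g gadd gmul gcompat gsurj geq
end

section
/- The action $\alpha$ of $S$ on $A$ extends to an action $\widehat{\alpha}: S \to \mathrm{Aut}(S^{-1} A)$ by ring automorphisms: for $s \in S$ and $[t, a] \in S^{-1} A$, set $\widehat{\alpha}_s([t, a]) = [s', \alpha_{t'}(a)]$ where $s', t' \in S$ satisfy $s' s = t' t$. This is well defined, independent of choices, each $\widehat{\alpha}_s$ is bijective, and $\widehat{\alpha}_{st} = \widehat{\alpha}_s \widehat{\alpha}_t$. -/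
/-!
Well-definedness is the heart of the matter. If `u₁ t₁ = u₂ t₂` witnesses `[t₁, a₁] = [t₂, a₂]`,
then any other pair `w₁, w₂` with `w₁ t₁ = w₂ t₂` also satisfies `α_{w₁} a₁ = α_{w₂} a₂`: an Ore
square `p w₁ = q u₁` and right cancellation give `q u₂ = p w₂`, so both sides agree after
`α_p`, which is injective. Pasting the Ore squares that define `α̂_s [t₁, a₁]` and
`α̂_s [t₂, a₂]` along a further Ore square produces such a pair. Once `α̂` is well defined,
each identity is checked on representatives brought to a common denominator, where it reduces
to the corresponding property of `α`.
-/

theorem paste_ore_squares {S : Type*} [Semigroup S] {v₁ v₂ s₁ s₂ s t₁ t₂ u₁ u₂ : S}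
    (hv : v₁ * s₁ = v₂ * s₂) (h₁ : s₁ * s = t₁ * u₁) (h₂ : s₂ * s = t₂ * u₂) : v₁ * t₁ * u₁ = v₂ * t₂ * u₂ := by
  rw [mul_assoc, ← h₁, ← mul_assoc, hv, mul_assoc, h₂, mul_assoc]

section OreTwist

variable {A S Q : Type*} [Monoid S] {α : S → A → A} {mk : S × A → Q} {β : S → Q → Q}

theorem α_eq_of_mul_eq_mul [IsRightCancelMul S] (hOre : ∀ s t : S, ∃ s' t' : S, s' * t = t' * s)
    (hcomp : ∀ (s t : S) (a : A), α (s * t) a = α s (α t a))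
    (hinj : ∀ s : S, Function.Injective (α s)) {t₁ t₂ u₁ u₂ w₁ w₂ : S} {a₁ a₂ : A}
    (hu : u₁ * t₁ = u₂ * t₂) (ha : α u₁ a₁ = α u₂ a₂) (hw : w₁ * t₁ = w₂ * t₂) :
    α w₁ a₁ = α w₂ a₂ := by
  obtain ⟨p, q, hpq⟩ := hOre u₁ w₁
  have hqp : q * u₂ = p * w₂ := mul_right_cancel (b := t₂) <| by
    rw [mul_assoc, ← hu, ← mul_assoc, ← hpq, mul_assoc, hw, mul_assoc]
  apply hinj p
  rw [← hcomp, hpq, hcomp, ha, ← hcomp, hqp, hcomp]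

theorem mk_ore_eq_of_mk_eq [IsRightCancelMul S]
    (hOre : ∀ s t : S, ∃ s' t' : S, s' * t = t' * s)
    (hcomp : ∀ (s t : S) (a : A), α (s * t) a = α s (α t a))
    (hinj : ∀ s : S, Function.Injective (α s))
    (heq : ∀ p q : S × A, mk p = mk q ↔
      ∃ t₁ t₂ : S, t₁ * p.1 = t₂ * q.1 ∧ α t₁ p.2 = α t₂ q.2)
    {s t₁ t₂ s₁' t₁' s₂' t₂' : S} {a₁ a₂ : A} (hmk : mk (t₁, a₁) = mk (t₂, a₂))
    (h₁ : s₁' * s = t₁' * t₁) (h₂ : s₂' * s = t₂' * t₂) :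
    mk (s₁', α t₁' a₁) = mk (s₂', α t₂' a₂) := by
  obtain ⟨u₁, u₂, hu, ha⟩ := (heq _ _).1 hmk
  obtain ⟨v₁, v₂, hv⟩ := hOre s₂' s₁'
  have hα := α_eq_of_mul_eq_mul hOre hcomp hinj hu ha (paste_ore_squares hv h₁ h₂)
  rw [hcomp, hcomp] at hα
  exact (heq _ _).2 ⟨v₁, v₂, hv, hα⟩

theorem exists_ore_twist [IsRightCancelMul S] (hOre : ∀ s t : S, ∃ s' t' : S, s' * t = t' * s)
    (hcomp : ∀ (s t : S) (a : A), α (s * t) a = α s (α t a))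
    (hinj : ∀ s : S, Function.Injective (α s)) (hsurj : Function.Surjective mk)
    (heq : ∀ p q : S × A, mk p = mk q ↔
      ∃ t₁ t₂ : S, t₁ * p.1 = t₂ * q.1 ∧ α t₁ p.2 = α t₂ q.2) :
    ∃ β : S → Q → Q,
      ∀ (s s' t t' : S) (a : A), s' * s = t' * t → β s (mk (t, a)) = mk (s', α t' a) := by
  choose rep hrep using hsurj
  choose s' t' hst using fun (s : S) (x : Q) => hOre (rep x).1 s
  refine ⟨fun s x => mk (s' s x, α (t' s x) (rep x).2), fun s s₀ t t₀ a h => ?_⟩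
  exact mk_ore_eq_of_mk_eq hOre hcomp hinj heq (hrep _) (hst s _) h

theorem ore_twist_one_apply (hone : ∀ a : A, α 1 a = a)
    (hβ : ∀ (s s' t t' : S) (a : A), s' * s = t' * t → β s (mk (t, a)) = mk (s', α t' a))
    (t : S) (a : A) : β 1 (mk (t, a)) = mk (t, a) := by
  rw [hβ 1 t t 1 a (by rw [mul_one, one_mul]), hone]

theorem ore_twist_mul_apply (hOre : ∀ s t : S, ∃ s' t' : S, s' * t = t' * s)
    (hcomp : ∀ (s t : S) (a : A), α (s * t) a = α s (α t a))
    (hβ : ∀ (s s' t t' : S) (a : A), s' * s = t' * t → β s (mk (t, a)) = mk (s', α t' a))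
    (s t u : S) (a : A) : β (s * t) (mk (u, a)) = β s (β t (mk (u, a))) := by
  obtain ⟨t', u', htu⟩ := hOre u t
  obtain ⟨s', w, hsw⟩ := hOre t' s
  have hstu : s' * (s * t) = w * u' * u := by rw [← mul_assoc, hsw, mul_assoc, htu, mul_assoc]
  rw [hβ t t' u u' a htu, hβ s s' t' w _ hsw, hβ _ s' u _ a hstu, hcomp]

theorem ore_twist_surjective (hone : ∀ a : A, α 1 a = a) (hsurj : Function.Surjective mk)
    (hβ : ∀ (s s' t t' : S) (a : A), s' * s = t' * t → β s (mk (t, a)) = mk (s', α t' a))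
    (s : S) : Function.Surjective (β s) := by
  intro y
  obtain ⟨⟨t, a⟩, rfl⟩ := hsurj y
  exact ⟨mk (t * s, a), by rw [hβ s t (t * s) 1 a (one_mul _).symm, hone]⟩

theorem ore_twist_injective (hOre : ∀ s t : S, ∃ s' t' : S, s' * t = t' * s)
    (hcomp : ∀ (s t : S) (a : A), α (s * t) a = α s (α t a)) (hsurj : Function.Surjective mk)
    (heq : ∀ p q : S × A, mk p = mk q ↔
      ∃ t₁ t₂ : S, t₁ * p.1 = t₂ * q.1 ∧ α t₁ p.2 = α t₂ q.2)
    (hβ : ∀ (s s' t t' : S) (a : A), s' * s = t' * t → β s (mk (t, a)) = mk (s', α t' a))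
    (s : S) : Function.Injective (β s) := by
  intro x y hxy
  obtain ⟨⟨t₁, a₁⟩, rfl⟩ := hsurj x
  obtain ⟨⟨t₂, a₂⟩, rfl⟩ := hsurj y
  obtain ⟨s₁', t₁', h₁⟩ := hOre t₁ s
  obtain ⟨s₂', t₂', h₂⟩ := hOre t₂ s
  rw [hβ s s₁' t₁ t₁' a₁ h₁, hβ s s₂' t₂ t₂' a₂ h₂, heq] at hxy
  obtain ⟨v₁, v₂, hv, ha⟩ := hxy
  refine (heq _ _).2 ⟨v₁ * t₁', v₂ * t₂', paste_ore_squares hv h₁ h₂, ?_⟩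
  simpa only [hcomp] using ha

theorem ore_twist_map_op (hone : ∀ a : A, α 1 a = a)
    (hOre : ∀ s t : S, ∃ s' t' : S, s' * t = t' * s)
    (hcomp : ∀ (s t : S) (a : A), α (s * t) a = α s (α t a))
    (hβ : ∀ (s s' t t' : S) (a : A), s' * s = t' * t → β s (mk (t, a)) = mk (s', α t' a))
    (op : Q → Q → Q) (opA : A → A → A)
    (hopA : ∀ (t : S) (a b : A), α t (opA a b) = opA (α t a) (α t b))
    (hopQ : ∀ (s₁ s₂ t₁ t₂ : S) (a₁ a₂ : A), t₁ * s₁ = t₂ * s₂ →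
      op (mk (s₁, a₁)) (mk (s₂, a₂)) = mk (t₁ * s₁, opA (α t₁ a₁) (α t₂ a₂)))
    (s t₁ t₂ : S) (a₁ a₂ : A) :
    β s (op (mk (t₁, a₁)) (mk (t₂, a₂))) = op (β s (mk (t₁, a₁))) (β s (mk (t₂, a₂))) := by
  obtain ⟨u₁, u₂, hu⟩ := hOre t₂ t₁
  obtain ⟨s', w, hsw⟩ := hOre (u₁ * t₁) s
  have h₁ : β s (mk (t₁, a₁)) = mk (s', α (w * u₁) a₁) :=
    hβ s s' t₁ (w * u₁) a₁ (by rw [hsw, mul_assoc])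
  have h₂ : β s (mk (t₂, a₂)) = mk (s', α (w * u₂) a₂) :=
    hβ s s' t₂ (w * u₂) a₂ (by rw [hsw, hu, mul_assoc])
  rw [hopQ t₁ t₂ u₁ u₂ a₁ a₂ hu, hβ s s' (u₁ * t₁) w _ hsw, h₁, h₂,
    hopQ s' s' 1 1 _ _ rfl, one_mul, hone, hone, hopA, hcomp, hcomp]

end OreTwist

/-- The action `α` of `S` on `A` extends to an action
`α̂ : S → Aut(S⁻¹A)` by ring automorphisms, with `α̂_s([t,a]) = [s', α_{t'}(a)]` whenever
`s's = t't`; this is well defined, each `α̂_s` is an additive and multiplicative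
bijection, `α̂_1 = id` and `α̂_{st} = α̂_s ∘ α̂_t`. -/
theorem stmt16 {A S Q : Type*} [Ring A] [Monoid S] [NonUnitalRing Q]
    (hcancel : ∀ a b c : S, (a * c = b * c → a = b) ∧ (c * a = c * b → a = b))
    (hOre : ∀ s t : S, ∃ s' t' : S, s' * t = t' * s)
    (α : S → A → A)
    (hadd : ∀ (t : S) (a b : A), α t (a + b) = α t a + α t b)
    (hmul : ∀ (t : S) (a b : A), α t (a * b) = α t a * α t b)
    (hone : ∀ a : A, α 1 a = a)
    (hcomp : ∀ (s t : S) (a : A), α (s * t) a = α s (α t a))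
    (hinj : ∀ s : S, Function.Injective (α s))
    (mk : S × A → Q) (hsurj : Function.Surjective mk)
    (heq : ∀ p q : S × A, mk p = mk q ↔
      ∃ t₁ t₂ : S, t₁ * p.1 = t₂ * q.1 ∧ α t₁ p.2 = α t₂ q.2)
    (hmulQ : ∀ (s₁ s₂ t₁ t₂ : S) (a₁ a₂ : A), t₁ * s₁ = t₂ * s₂ →
      mk (s₁, a₁) * mk (s₂, a₂) = mk (t₁ * s₁, α t₁ a₁ * α t₂ a₂))
    (haddQ : ∀ (s₁ s₂ t₁ t₂ : S) (a₁ a₂ : A), t₁ * s₁ = t₂ * s₂ →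
      mk (s₁, a₁) + mk (s₂, a₂) = mk (t₁ * s₁, α t₁ a₁ + α t₂ a₂)) :
    ∃ β : S → Q → Q,
      (∀ (s s' t t' : S) (a : A), s' * s = t' * t → β s (mk (t, a)) = mk (s', α t' a)) ∧
      (∀ s : S, Function.Bijective (β s)) ∧
      (∀ (s : S) (x y : Q), β s (x + y) = β s x + β s y) ∧
      (∀ (s : S) (x y : Q), β s (x * y) = β s x * β s y) ∧
      (∀ x : Q, β 1 x = x) ∧
      (∀ (s t : S) (x : Q), β (s * t) x = β s (β t x)) := by
  have : IsRightCancelMul S := ⟨fun a b c => (hcancel b c a).1⟩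
  obtain ⟨β, hβ⟩ := exists_ore_twist hOre hcomp hinj hsurj heq
  refine ⟨β, hβ, fun s => ⟨ore_twist_injective hOre hcomp hsurj heq hβ s,
    ore_twist_surjective hone hsurj hβ s⟩, fun s => ?_, fun s => ?_, ?_, fun s t => ?_⟩
  · exact hsurj.forall₂.2 fun ⟨t₁, a₁⟩ ⟨t₂, a₂⟩ =>
      ore_twist_map_op hone hOre hcomp hβ _ _ hadd haddQ s t₁ t₂ a₁ a₂
  · exact hsurj.forall₂.2 fun ⟨t₁, a₁⟩ ⟨t₂, a₂⟩ =>
      ore_twist_map_op hone hOre hcomp hβ _ _ hmul hmulQ s t₁ t₂ a₁ a₂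
  · exact hsurj.forall.2 fun ⟨t, a⟩ => ore_twist_one_apply hone hβ t a
  · exact hsurj.forall.2 fun ⟨u, a⟩ => ore_twist_mul_apply hOre hcomp hβ s t u a
end

section
/- The map $\phi: A \to S^{-1} A$ given by $a \mapsto [1_S, a]$ is an injective, $S$-equivariant ring homomorphism (i.e., $\phi(\alpha_s(a)) = \widehat{\alpha}_s(\phi(a))$ for all $s \in S$, $a \in A$). Moreover, if $\alpha$ acts by corner isomorphisms, the image of $\phi$ equals the corner $[1_S, 1_A] \cdot S^{-1} A \cdot [1_S, 1_A]$. -/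
/-!
The map `a ↦ [1, a]` is additive and multiplicative because the sum and product of two fractions
with denominator `1` are computed with the Ore data `1 * 1 = 1 * 1`, and it is injective because
`[1, a] = [1, b]` forces `α t a = α t b` for some `t`. For the corner: `[1,1]·[t,b]·[1,1]` is
`[t, e b e]` with `e = α t 1` idempotent, so `e b e` lies in the corner `e A e = α t (A)`, say
`e b e = α t c`, and then `[t, α t c] = [1, c]`.
-/

theorem mul_mul_mem_range_of_range_eq_corner {M N : Type*} [MulOneClass M] [Semigroup N]
    {f : M → N} (hmul : ∀ a b, f (a * b) = f a * f b)
    (hcorner : Set.range f = {x | x = f 1 * x * f 1}) (b : N) :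
    f 1 * b * f 1 ∈ Set.range f := by
  have he : IsIdempotentElem (f 1) := by rw [IsIdempotentElem, ← hmul, one_mul]
  rw [hcorner, Set.mem_ofPred_eq]
  simp only [mul_assoc, he.eq, he.mul_self_mul]

theorem mk_map_eq_mk_one {A S Q : Type*} [Monoid S] {α : S → A → A} {mk : S × A → Q}
    (hone : ∀ a : A, α 1 a = a)
    (heq : ∀ p q : S × A, mk p = mk q ↔ ∃ t₁ t₂ : S, t₁ * p.1 = t₂ * q.1 ∧ α t₁ p.2 = α t₂ q.2)
    (t : S) (c : A) : mk (t, α t c) = mk (1, c) :=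
  (heq _ _).mpr ⟨1, t, by rw [one_mul, mul_one], by rw [hone]⟩

theorem mk_one_mul_mk_mul_mk_one {A S Q : Type*} [MulOneClass A] [Monoid S] [Mul Q]
    {α : S → A → A} {mk : S × A → Q} (hone : ∀ a : A, α 1 a = a)
    (hmulQ : ∀ (s₁ s₂ t₁ t₂ : S) (a₁ a₂ : A), t₁ * s₁ = t₂ * s₂ →
      mk (s₁, a₁) * mk (s₂, a₂) = mk (t₁ * s₁, α t₁ a₁ * α t₂ a₂))
    (t : S) (b : A) : mk (1, 1) * mk (t, b) * mk (1, 1) = mk (t, α t 1 * b * α t 1) := by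
  rw [hmulQ 1 t t 1 1 b (by rw [one_mul, mul_one]), mul_one, hone,
    hmulQ t 1 1 t _ 1 (by rw [one_mul, mul_one]), one_mul, hone]

theorem stmt17_general {A S Q : Type*} [Ring A] [Monoid S] [NonUnitalRing Q]
    (α : S → A → A)
    (hmul : ∀ (t : S) (a b : A), α t (a * b) = α t a * α t b)
    (hone : ∀ a : A, α 1 a = a)
    (hinj : ∀ s : S, Function.Injective (α s))
    (hcorner : ∀ s : S, Set.range (α s) = {x | x = α s 1 * x * α s 1})
    (mk : S × A → Q) (hsurj : Function.Surjective mk)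
    (heq : ∀ p q : S × A, mk p = mk q ↔
      ∃ t₁ t₂ : S, t₁ * p.1 = t₂ * q.1 ∧ α t₁ p.2 = α t₂ q.2)
    (hmulQ : ∀ (s₁ s₂ t₁ t₂ : S) (a₁ a₂ : A), t₁ * s₁ = t₂ * s₂ →
      mk (s₁, a₁) * mk (s₂, a₂) = mk (t₁ * s₁, α t₁ a₁ * α t₂ a₂))
    (haddQ : ∀ (s₁ s₂ t₁ t₂ : S) (a₁ a₂ : A), t₁ * s₁ = t₂ * s₂ →
      mk (s₁, a₁) + mk (s₂, a₂) = mk (t₁ * s₁, α t₁ a₁ + α t₂ a₂))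
    (β : S → Q → Q)
    (hβ : ∀ (s s' t t' : S) (a : A), s' * s = t' * t → β s (mk (t, a)) = mk (s', α t' a)) :
    Function.Injective (fun a : A => mk (1, a)) ∧
    (∀ a b : A, mk (1, a + b) = mk (1, a) + mk (1, b)) ∧
    (∀ a b : A, mk (1, a * b) = mk (1, a) * mk (1, b)) ∧
    (∀ (s : S) (a : A), mk (1, α s a) = β s (mk (1, a))) ∧
    Set.range (fun a : A => mk (1, a)) =
      (fun x : Q => mk (1, 1) * x * mk (1, 1)) '' Set.univ := by
  have mk_one_mul (a b : A) : mk (1, a * b) = mk (1, a) * mk (1, b) := by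
    rw [hmulQ 1 1 1 1 a b rfl, one_mul, hone, hone]
  refine ⟨fun a b h => ?_, fun a b => ?_, mk_one_mul, fun s a => ?_, ?_⟩
  · obtain ⟨t₁, t₂, ht, ha⟩ := (heq _ _).mp h
    rw [mul_one, mul_one] at ht
    exact hinj t₁ (ht ▸ ha)
  · rw [haddQ 1 1 1 1 a b rfl, one_mul, hone, hone]
  · exact (hβ s 1 1 s a (by rw [one_mul, mul_one])).symm
  · ext x
    constructor
    · rintro ⟨a, rfl⟩
      exact ⟨mk (1, a), trivial, by beta_reduce; rw [← mk_one_mul, ← mk_one_mul, one_mul, mul_one]⟩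
    · rintro ⟨y, -, rfl⟩
      obtain ⟨⟨t, b⟩, rfl⟩ := hsurj y
      obtain ⟨c, hc⟩ := mul_mul_mem_range_of_range_eq_corner (hmul t) (hcorner t) b
      exact ⟨c, by beta_reduce; rw [mk_one_mul_mk_mul_mk_one hone hmulQ, ← hc, mk_map_eq_mk_one hone heq]⟩

/-- The map `φ : A → S⁻¹A`, `a ↦ [1,a]`, is an injective `S`-equivariant
ring homomorphism; if moreover `α` acts by corner isomorphisms, the image of `φ` is the
corner `[1,1]·S⁻¹A·[1,1]`. -/
theorem stmt17 {A S Q : Type*} [Ring A] [Monoid S] [NonUnitalRing Q]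
    (hcancel : ∀ a b c : S, (a * c = b * c → a = b) ∧ (c * a = c * b → a = b))
    (hOre : ∀ s t : S, ∃ s' t' : S, s' * t = t' * s)
    (α : S → A → A)
    (hadd : ∀ (t : S) (a b : A), α t (a + b) = α t a + α t b)
    (hmul : ∀ (t : S) (a b : A), α t (a * b) = α t a * α t b)
    (hone : ∀ a : A, α 1 a = a)
    (hcomp : ∀ (s t : S) (a : A), α (s * t) a = α s (α t a))
    (hinj : ∀ s : S, Function.Injective (α s))
    (hcorner : ∀ s : S, Set.range (α s) = {x | x = α s 1 * x * α s 1})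
    (mk : S × A → Q) (hsurj : Function.Surjective mk)
    (heq : ∀ p q : S × A, mk p = mk q ↔
      ∃ t₁ t₂ : S, t₁ * p.1 = t₂ * q.1 ∧ α t₁ p.2 = α t₂ q.2)
    (hmulQ : ∀ (s₁ s₂ t₁ t₂ : S) (a₁ a₂ : A), t₁ * s₁ = t₂ * s₂ →
      mk (s₁, a₁) * mk (s₂, a₂) = mk (t₁ * s₁, α t₁ a₁ * α t₂ a₂))
    (haddQ : ∀ (s₁ s₂ t₁ t₂ : S) (a₁ a₂ : A), t₁ * s₁ = t₂ * s₂ →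
      mk (s₁, a₁) + mk (s₂, a₂) = mk (t₁ * s₁, α t₁ a₁ + α t₂ a₂))
    (β : S → Q → Q)
    (hβ : ∀ (s s' t t' : S) (a : A), s' * s = t' * t → β s (mk (t, a)) = mk (s', α t' a)) :
    Function.Injective (fun a : A => mk (1, a)) ∧
    (∀ a b : A, mk (1, a + b) = mk (1, a) + mk (1, b)) ∧
    (∀ a b : A, mk (1, a * b) = mk (1, a) * mk (1, b)) ∧
    (∀ (s : S) (a : A), mk (1, α s a) = β s (mk (1, a))) ∧
    Set.range (fun a : A => mk (1, a)) =
      (fun x : Q => mk (1, 1) * x * mk (1, 1)) '' Set.univ :=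
  stmt17_general α hmul hone hinj hcorner mk hsurj heq hmulQ haddQ β hβ
end
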